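/- arXiv:0902.3471 — 4 statements merged into one kernel-verified Lean document; each statement's English description precedes it below -/
import Mathlib

section
/- Let b : ℝ → ℝ be smooth, 1-periodic (b(x+1) = b(x) for all x) with ∫₀¹ b(x) dx = 0, and set V(x) = ∫₀ˣ b(y) dy. Then for every smooth 1-periodic function h : ℝ → ℝ satisfying the centering condition ∫₀¹ h(x) e^{2V(x)} dx = 0, there exists a unique smooth 1-periodic function g : ℝ → ℝ such that (1/2) g''(x) + b(x) g'(x) = h(x) for all x ∈ ℝ and ∫₀¹ g(x) e^{2V(x)} dx = 0. -/
open intervalIntegral in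
lemma antideriv_hasDerivAt (f : ℝ → ℝ) (hf : Continuous f) (x : ℝ) :
    HasDerivAt (fun u => ∫ t in (0:ℝ)..u, f t) (f x) x :=
  integral_hasDerivAt_right (hf.intervalIntegrable _ _)
    (hf.stronglyMeasurableAtFilter _ _) hf.continuousAt

lemma antideriv_contDiff (f : ℝ → ℝ) (hf : ContDiff ℝ (⊤ : ℕ∞) f) :
    ContDiff ℝ (⊤ : ℕ∞) (fun u => ∫ t in (0:ℝ)..u, f t) := by
  have hd := antideriv_hasDerivAt f hf.continuous
  have hderiv : deriv (fun u => ∫ t in (0:ℝ)..u, f t) = f := funext fun x => (hd x).deriv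
  exact contDiff_infty_iff_deriv.2 ⟨fun x => (hd x).differentiableAt, by rw [hderiv]; exact hf⟩

lemma homog_zero (b V : ℝ → ℝ)
    (hVd : ∀ x, HasDerivAt V (b x) x) (hVc : Continuous V)
    (d : ℝ → ℝ) (hd1 : Differentiable ℝ d) (hd2 : Differentiable ℝ (deriv d))
    (hdper : ∀ x, d (x + 1) = d x)
    (hode : ∀ x, (1/2) * deriv (deriv d) x + b x * deriv d x = 0)
    (hcent : (∫ x in (0:ℝ)..1, d x * Real.exp (2 * V x)) = 0) :
    ∀ x, d x = 0 := by
  have hw : ∀ x, HasDerivAt (fun x => Real.exp (2 * V x) * deriv d x) 0 x := by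
    intro x
    have he : HasDerivAt (fun x => Real.exp (2 * V x)) (Real.exp (2 * V x) * (2 * b x)) x :=
      ((hVd x).const_mul 2).exp
    have hdd : HasDerivAt (deriv d) (deriv (deriv d) x) x := (hd2 x).hasDerivAt
    have := he.mul hdd
    convert this using 1
    · rfl
    · rfl
    · rfl
    have h2 : Real.exp (2 * V x) * (2 * b x) * deriv d x
        + Real.exp (2 * V x) * deriv (deriv d) x
        = 2 * Real.exp (2 * V x)
          * ((1/2) * deriv (deriv d) x + b x * deriv d x) := by ring
    rw [h2, hode x, mul_zero]
  set K : ℝ := Real.exp (2 * V 0) * deriv d 0 with hKdef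
  have hwconst : ∀ x, Real.exp (2 * V x) * deriv d x = K := by
    intro x
    exact is_const_of_deriv_eq_zero (fun y => (hw y).differentiableAt)
      (fun y => (hw y).deriv) x 0
  have hK : ∀ x, deriv d x = K * Real.exp (-(2 * V x)) := by
    intro x
    have := hwconst x
    rw [Real.exp_neg]
    field_simp
    linarith [this]
  have hIpos : 0 < ∫ x in (0:ℝ)..1, Real.exp (-(2 * V x)) := by
    apply intervalIntegral.intervalIntegral_pos_of_pos
      ((Real.continuous_exp.comp (continuous_const.mul hVc).neg).intervalIntegrable 0 1)
      (fun x => Real.exp_pos _) one_pos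
  have hdint : (∫ x in (0:ℝ)..1, deriv d x) = 0 := by
    rw [intervalIntegral.integral_deriv_eq_sub (fun x _ => hd1 x)
      ((hd2.continuous).intervalIntegrable 0 1)]
    have := hdper 0
    rw [zero_add] at this
    rw [this, sub_self]
  have hKint : (∫ x in (0:ℝ)..1, deriv d x)
      = K * ∫ x in (0:ℝ)..1, Real.exp (-(2 * V x)) := by
    rw [show (∫ x in (0:ℝ)..1, deriv d x)
        = ∫ x in (0:ℝ)..1, K * Real.exp (-(2 * V x)) from
      intervalIntegral.integral_congr (fun x _ => hK x)]
    exact intervalIntegral.integral_const_mul K _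
  have hK0 : K = 0 := by
    have := hKint.symm.trans hdint
    rcases mul_eq_zero.1 this with h | h
    · exact h
    · exact absurd h (ne_of_gt hIpos)
  have hd0 : ∀ x, deriv d x = 0 := by
    intro x; rw [hK x, hK0, zero_mul]
  have hdconst : ∀ x, d x = d 0 := fun x => is_const_of_deriv_eq_zero hd1 hd0 x 0
  have hEpos : 0 < ∫ x in (0:ℝ)..1, Real.exp (2 * V x) := by
    apply intervalIntegral.intervalIntegral_pos_of_pos
      ((Real.continuous_exp.comp (continuous_const.mul hVc)).intervalIntegrable 0 1)
      (fun x => Real.exp_pos _) one_pos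
  have hc0 : d 0 = 0 := by
    have h1 : (∫ x in (0:ℝ)..1, d x * Real.exp (2 * V x))
        = d 0 * ∫ x in (0:ℝ)..1, Real.exp (2 * V x) := by
      rw [show (∫ x in (0:ℝ)..1, d x * Real.exp (2 * V x))
          = ∫ x in (0:ℝ)..1, d 0 * Real.exp (2 * V x) from
        intervalIntegral.integral_congr (fun x _ => by rw [hdconst x])]
      exact intervalIntegral.integral_const_mul _ _
    rw [hcent] at h1
    rcases mul_eq_zero.1 h1.symm with h | h
    · exact h
    · exact absurd h (ne_of_gt hEpos)
  intro x
  rw [hdconst x, hc0]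

lemma periodic_primitive (f : ℝ → ℝ) (hfc : Continuous f) (hfper : Function.Periodic f 1)
    (hfcent : (∫ t in (0:ℝ)..1, f t) = 0) (x : ℝ) :
    (∫ t in (0:ℝ)..(x+1), f t) = ∫ t in (0:ℝ)..x, f t := by
  have h1 : (∫ t in x..(x+1), f t) = ∫ t in (0:ℝ)..(0+1), f t :=
    hfper.intervalIntegral_add_eq x 0
  have h2 : (∫ t in (0:ℝ)..(x+1), f t)
      = (∫ t in (0:ℝ)..x, f t) + ∫ t in x..(x+1), f t :=
    (intervalIntegral.integral_add_adjacent_intervals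
      (hfc.intervalIntegrable _ _) (hfc.intervalIntegrable _ _)).symm
  rw [h2, h1, zero_add, hfcent, add_zero]

lemma smooth_facts (f : ℝ → ℝ) (hf : ContDiff ℝ (⊤ : ℕ∞) f) :
    Differentiable ℝ f ∧ Differentiable ℝ (deriv f) ∧ Continuous (deriv (deriv f)) := by
  have h1 : ContDiff ℝ (((⊤ : ℕ∞) : WithTop ℕ∞)) f := hf.of_le (by simp)
  obtain ⟨h2, h3⟩ := contDiff_infty_iff_deriv.1 h1
  obtain ⟨h4, h5⟩ := contDiff_infty_iff_deriv.1 h3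
  exact ⟨h2, h4, h5.continuous⟩


/-- **Fredholm alternative for the one-dimensional cell problem.**
If `b` is smooth, 1-periodic and centred, `V(x) = ∫₀ˣ b`, then for every smooth
1-periodic `h` with `∫₀¹ h e^{2V} = 0` there is a unique smooth 1-periodic `g`
with `(1/2) g'' + b g' = h` and `∫₀¹ g e^{2V} = 0`. -/
theorem stmt_0 (b : ℝ → ℝ) (hb : ContDiff ℝ (⊤ : ℕ∞) b)
    (hbper : ∀ x, b (x + 1) = b x)
    (hbcent : (∫ x in (0:ℝ)..1, b x) = 0)
    (V : ℝ → ℝ) (hV : ∀ x, V x = ∫ y in (0:ℝ)..x, b y)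
    (h : ℝ → ℝ) (hh : ContDiff ℝ (⊤ : ℕ∞) h)
    (hhper : ∀ x, h (x + 1) = h x)
    (hhcent : (∫ x in (0:ℝ)..1, h x * Real.exp (2 * V x)) = 0) :
    ∃! g : ℝ → ℝ, ContDiff ℝ (⊤ : ℕ∞) g ∧ (∀ x, g (x + 1) = g x) ∧
      (∀ x, (1/2) * deriv (deriv g) x + b x * deriv g x = h x) ∧
      (∫ x in (0:ℝ)..1, g x * Real.exp (2 * V x)) = 0 := by
  have hVfun : V = fun x => ∫ y in (0:ℝ)..x, b y := funext hV
  have hVd : ∀ x, HasDerivAt V (b x) x := by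
    rw [hVfun]; exact antideriv_hasDerivAt b hb.continuous
  have hVsm : ContDiff ℝ (⊤ : ℕ∞) V := by rw [hVfun]; exact antideriv_contDiff b hb
  have hVc : Continuous V := hVsm.continuous
  have hVper : ∀ x, V (x + 1) = V x := by
    intro x
    rw [hV (x + 1), hV x]
    exact periodic_primitive b hb.continuous hbper hbcent x
  -- the weight and related functions
  set ψ : ℝ → ℝ := fun t => 2 * (h t * Real.exp (2 * V t)) with hψdef
  have hψsm : ContDiff ℝ (⊤ : ℕ∞) ψ :=
    contDiff_const.mul (hh.mul (Real.contDiff_exp.comp (contDiff_const.mul hVsm)))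
  have hψper : Function.Periodic ψ 1 := by
    intro t; simp only [hψdef, hhper t, hVper t]
  have hψcent : (∫ t in (0:ℝ)..1, ψ t) = 0 := by
    rw [hψdef]
    rw [intervalIntegral.integral_const_mul 2 (fun t => h t * Real.exp (2 * V t)), hhcent,
      mul_zero]
  set φ : ℝ → ℝ := fun x => ∫ t in (0:ℝ)..x, ψ t with hφdef
  have hφsm : ContDiff ℝ (⊤ : ℕ∞) φ := antideriv_contDiff ψ hψsm
  have hφd : ∀ x, HasDerivAt φ (ψ x) x := antideriv_hasDerivAt ψ hψsm.continuous
  have hφper : ∀ x, φ (x + 1) = φ x := fun x =>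
    periodic_primitive ψ hψsm.continuous hψper hψcent x
  -- constants
  have hEmc : Continuous fun x => Real.exp (-(2 * V x)) :=
    Real.continuous_exp.comp (continuous_const.mul hVc).neg
  set I1 : ℝ := ∫ x in (0:ℝ)..1, Real.exp (-(2 * V x)) with hI1def
  set I2 : ℝ := ∫ x in (0:ℝ)..1, Real.exp (-(2 * V x)) * φ x with hI2def
  have hI1pos : 0 < I1 :=
    intervalIntegral.intervalIntegral_pos_of_pos (hEmc.intervalIntegrable 0 1)
      (fun x => Real.exp_pos _) one_pos
  set C : ℝ := -I2 / I1 with hCdef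
  set u : ℝ → ℝ := fun x => Real.exp (-(2 * V x)) * (C + φ x) with hudef
  have husm : ContDiff ℝ (⊤ : ℕ∞) u :=
    (Real.contDiff_exp.comp (contDiff_const.mul hVsm).neg).mul (contDiff_const.add hφsm)
  have huper : ∀ x, u (x + 1) = u x := by
    intro x; simp only [hudef, hVper x, hφper x]
  have hud : ∀ x, HasDerivAt u (2 * h x - 2 * b x * u x) x := by
    intro x
    have he : HasDerivAt (fun x => Real.exp (-(2 * V x)))
        (Real.exp (-(2 * V x)) * (-(2 * b x))) x := (((hVd x).const_mul 2).neg).exp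
    have hφ' : HasDerivAt (fun x => C + φ x) (ψ x) x := (hφd x).const_add C
    have hprod := he.mul hφ'
    convert hprod using 1
    · rfl
    · rfl
    · rfl
    have hexp : Real.exp (-(2 * V x)) * Real.exp (2 * V x) = 1 := by
      rw [← Real.exp_add]; simp
    show 2 * h x - 2 * b x * (Real.exp (-(2 * V x)) * (C + φ x))
        = Real.exp (-(2 * V x)) * (-(2 * b x)) * (C + φ x)
          + Real.exp (-(2 * V x)) * (2 * (h x * Real.exp (2 * V x)))
    linear_combination (-(2 * h x)) * hexp
  have hucent : (∫ x in (0:ℝ)..1, u x) = 0 := by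
    have hsplit : (∫ x in (0:ℝ)..1, u x)
        = (∫ x in (0:ℝ)..1, C * Real.exp (-(2 * V x)))
          + ∫ x in (0:ℝ)..1, Real.exp (-(2 * V x)) * φ x := by
      rw [← intervalIntegral.integral_add (f := fun x => C * Real.exp (-(2 * V x))) (g := fun x => Real.exp (-(2 * V x)) * φ x) ((continuous_const.mul hEmc : Continuous fun x => C * Real.exp (-(2 * V x))).intervalIntegrable 0 1)
        ((hEmc.mul hφsm.continuous).intervalIntegrable 0 1)]
      exact intervalIntegral.integral_congr (fun x _ => by simp [hudef]; ring)
    rw [hsplit, intervalIntegral.integral_const_mul, ← hI1def, ← hI2def, hCdef]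
    field_simp
    ring
  -- the primitive of u and final normalisation
  set g₀ : ℝ → ℝ := fun x => ∫ t in (0:ℝ)..x, u t with hg₀def
  have hg₀sm : ContDiff ℝ (⊤ : ℕ∞) g₀ := antideriv_contDiff u husm
  have hg₀d : ∀ x, HasDerivAt g₀ (u x) x := antideriv_hasDerivAt u husm.continuous
  have hg₀per : ∀ x, g₀ (x + 1) = g₀ x := fun x =>
    periodic_primitive u husm.continuous huper hucent x
  have hEc : Continuous fun x => Real.exp (2 * V x) :=
    Real.continuous_exp.comp (continuous_const.mul hVc)
  set J : ℝ := ∫ x in (0:ℝ)..1, Real.exp (2 * V x) with hJdef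
  have hJpos : 0 < J :=
    intervalIntegral.intervalIntegral_pos_of_pos (hEc.intervalIntegrable 0 1)
      (fun x => Real.exp_pos _) one_pos
  set A : ℝ := (∫ x in (0:ℝ)..1, g₀ x * Real.exp (2 * V x)) / J with hAdef
  set g : ℝ → ℝ := fun x => g₀ x - A with hgdef
  have hgsm : ContDiff ℝ (⊤ : ℕ∞) g := hg₀sm.sub contDiff_const
  have hgper : ∀ x, g (x + 1) = g x := by
    intro x; simp only [hgdef, hg₀per x]
  have hgderiv : deriv g = u := by
    funext x
    rw [hgdef]
    rw [deriv_sub_const]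
    exact (hg₀d x).deriv
  have hgode : ∀ x, (1/2) * deriv (deriv g) x + b x * deriv g x = h x := by
    intro x
    rw [hgderiv, (hud x).deriv]
    ring
  have hgcent : (∫ x in (0:ℝ)..1, g x * Real.exp (2 * V x)) = 0 := by
    have hsplit : (∫ x in (0:ℝ)..1, g x * Real.exp (2 * V x))
        = (∫ x in (0:ℝ)..1, g₀ x * Real.exp (2 * V x))
          - ∫ x in (0:ℝ)..1, A * Real.exp (2 * V x) := by
      rw [← intervalIntegral.integral_sub (f := fun x => g₀ x * Real.exp (2 * V x)) (g := fun x => A * Real.exp (2 * V x))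
        ((hg₀sm.continuous.mul hEc).intervalIntegrable 0 1)
        ((continuous_const.mul hEc : Continuous fun x => A * Real.exp (2 * V x)).intervalIntegrable 0 1)]
      exact intervalIntegral.integral_congr (fun x _ => by simp [hgdef]; ring)
    rw [hsplit, intervalIntegral.integral_const_mul, ← hJdef, hAdef]
    field_simp
    ring
  refine ⟨g, ⟨hgsm, hgper, hgode, hgcent⟩, ?_⟩
  -- uniqueness
  rintro y ⟨hysm, hyper, hyode, hycent⟩
  funext x
  obtain ⟨hy1, hy2, -⟩ := smooth_facts y hysm
  obtain ⟨hg1, hg2, -⟩ := smooth_facts g hgsm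
  set d : ℝ → ℝ := fun x => y x - g x with hddef
  have hd1 : Differentiable ℝ d := hy1.sub hg1
  have hdd : deriv d = fun x => deriv y x - deriv g x := by
    funext z; exact deriv_sub (hy1 z) (hg1 z)
  have hd2 : Differentiable ℝ (deriv d) := by
    rw [hdd]; exact hy2.sub hg2
  have hddd : ∀ z, deriv (deriv d) z = deriv (deriv y) z - deriv (deriv g) z := by
    intro z; rw [hdd]; exact deriv_sub (hy2 z) (hg2 z)
  have hdper : ∀ z, d (z + 1) = d z := by
    intro z; simp only [hddef, hyper z, hgper z]
  have hdode : ∀ z, (1/2) * deriv (deriv d) z + b z * deriv d z = 0 := by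
    intro z
    rw [hddd z, hdd]
    have h1 := hyode z
    have h2 := hgode z
    ring_nf
    ring_nf at h1 h2
    linarith
  have hdcent : (∫ z in (0:ℝ)..1, d z * Real.exp (2 * V z)) = 0 := by
    have hsplit : (∫ z in (0:ℝ)..1, d z * Real.exp (2 * V z))
        = (∫ z in (0:ℝ)..1, y z * Real.exp (2 * V z))
          - ∫ z in (0:ℝ)..1, g z * Real.exp (2 * V z) := by
      rw [← intervalIntegral.integral_sub (f := fun z => y z * Real.exp (2 * V z)) (g := fun z => g z * Real.exp (2 * V z))
        ((hysm.continuous.mul hEc).intervalIntegrable 0 1)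
        ((hgsm.continuous.mul hEc).intervalIntegrable 0 1)]
      exact intervalIntegral.integral_congr (fun z _ => by simp [hddef]; ring)
    rw [hsplit, hycent, hgcent, sub_zero]
  have := homog_zero b V hVd hVc d hd1 hd2 hdper hdode hdcent x
  simpa [hddef, sub_eq_zero] using this
end

section
/- Let b : ℝ → ℝ be smooth, 1-periodic with ∫₀¹ b(x) dx = 0, set V(x) = ∫₀ˣ b(y) dy, and let g : ℝ → ℝ be a twice continuously differentiable 1-periodic function satisfying (1/2) g''(x) + b(x) g'(x) = −b(x) for all x. Then the effective diffusion coefficient satisfies the identity (∫₀¹ (1 + g'(x))² e^{2V(x)} dx) / (∫₀¹ e^{2V(x)} dx) = ( ∫₀¹ e^{2V(x)} dx · ∫₀¹ e^{−2V(x)} dx )^{−1}. -/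
open intervalIntegral Real

/-- **Two formulas for the effective diffusion coefficient.**
With `b` smooth, 1-periodic, centred, `V(x) = ∫₀ˣ b`, and `g` a 1-periodic `C²`
solution of the cell problem `(1/2) g'' + b g' = -b`, one has
`(∫₀¹ (1+g')² e^{2V}) / (∫₀¹ e^{2V}) = ( ∫₀¹ e^{2V} · ∫₀¹ e^{-2V} )⁻¹`. -/
theorem stmt_2 (b : ℝ → ℝ) (hb : ContDiff ℝ (⊤ : ℕ∞) b)
    (hbper : ∀ x, b (x + 1) = b x)
    (hbcent : (∫ x in (0:ℝ)..1, b x) = 0)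
    (V : ℝ → ℝ) (hV : ∀ x, V x = ∫ y in (0:ℝ)..x, b y)
    (g : ℝ → ℝ) (hg : ContDiff ℝ 2 g)
    (hgper : ∀ x, g (x + 1) = g x)
    (hgeq : ∀ x, (1/2) * deriv (deriv g) x + b x * deriv g x = - b x) :
    (∫ x in (0:ℝ)..1, (1 + deriv g x)^2 * Real.exp (2 * V x)) /
        (∫ x in (0:ℝ)..1, Real.exp (2 * V x))
      = ((∫ x in (0:ℝ)..1, Real.exp (2 * V x)) *
          (∫ x in (0:ℝ)..1, Real.exp (-(2 * V x))))⁻¹ := by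
  have hbc : Continuous b := hb.continuous
  have hVfun : V = fun x => ∫ y in (0:ℝ)..x, b y := funext hV
  have hVderiv : ∀ x, HasDerivAt V (b x) x := by
    intro x
    rw [hVfun]
    exact intervalIntegral.integral_hasDerivAt_right
      (hbc.intervalIntegrable _ _)
      (hbc.stronglyMeasurableAtFilter _ _)
      hbc.continuousAt
  have hVc : Continuous V := by
    have : Differentiable ℝ V := fun x => (hVderiv x).differentiableAt
    exact this.continuous
  -- regularity of g
  have hg' : ContDiff ℝ 1 (deriv g) := by
    have h2 : ContDiff ℝ (1 + 1) g := by norm_num; exact hg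
    exact (contDiff_succ_iff_deriv.mp h2).2.2
  have hg'diff : ∀ x, HasDerivAt (deriv g) (deriv (deriv g) x) x := by
    intro x
    have : Differentiable ℝ (deriv g) := hg'.differentiable one_ne_zero
    exact (this x).hasDerivAt
  have hg'c : Continuous (deriv g) := hg'.continuous
  have hg''c : Continuous (deriv (deriv g)) := by
    have := (contDiff_succ_iff_deriv.mp (show ContDiff ℝ (0 + 1) (deriv g) by
      norm_num; exact hg')).2.2
    exact this.continuous
  -- the conserved quantity h = (1 + g') e^{2V}
  set h : ℝ → ℝ := fun x => (1 + deriv g x) * Real.exp (2 * V x) with hh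
  have hE : ∀ x, HasDerivAt (fun y => Real.exp (2 * V y))
      (Real.exp (2 * V x) * (2 * b x)) x := by
    intro x
    exact (((hVderiv x).const_mul 2).exp)
  have hhderiv : ∀ x, HasDerivAt h 0 x := by
    intro x
    have h1 : HasDerivAt (fun y => 1 + deriv g y) (deriv (deriv g) x) x :=
      (hg'diff x).const_add 1
    have := h1.mul (hE x)
    have key : deriv (deriv g) x * Real.exp (2 * V x) +
        (1 + deriv g x) * (Real.exp (2 * V x) * (2 * b x)) = 0 := by
      have := hgeq x
      nlinarith [Real.exp_pos (2 * V x)]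
    rw [key] at this
    exact this
  have hhconst : ∀ x, h x = h 0 :=
    fun x => is_const_of_deriv_eq_zero
      (fun y => (hhderiv y).differentiableAt) (fun y => (hhderiv y).deriv) x 0
  set C : ℝ := h 0 with hC
  have hpt : ∀ x, (1 + deriv g x) * Real.exp (2 * V x) = C := fun x => hhconst x
  -- ∫₀¹ (1 + g') = 1
  have hint_g' : (∫ x in (0:ℝ)..1, deriv g x) = 0 := by
    rw [intervalIntegral.integral_deriv_eq_sub
      (fun x _ => hg.differentiable (by norm_num) x)
      (hg'c.intervalIntegrable _ _)]
    have := hgper 0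
    simp at this
    simp [this]
  have hint1 : (∫ x in (0:ℝ)..1, (1 + deriv g x)) = 1 := by
    rw [intervalIntegral.integral_add (intervalIntegrable_const)
      (hg'c.intervalIntegrable _ _)]
    simp [hint_g']
  -- pointwise: 1 + g' = C e^{-2V}
  have hpt2 : ∀ x, 1 + deriv g x = C * Real.exp (-(2 * V x)) := by
    intro x
    have e := hpt x
    have hne : Real.exp (2 * V x) ≠ 0 := (Real.exp_pos _).ne'
    rw [Real.exp_neg, eq_mul_inv_iff_mul_eq₀ hne]
    linarith [e]
  -- C * ∫ e^{-2V} = 1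
  have hCB : C * (∫ x in (0:ℝ)..1, Real.exp (-(2 * V x))) = 1 := by
    have : (∫ x in (0:ℝ)..1, C * Real.exp (-(2 * V x)))
        = ∫ x in (0:ℝ)..1, (1 + deriv g x) := by
      apply intervalIntegral.integral_congr
      intro x _
      exact (hpt2 x).symm
    rw [← intervalIntegral.integral_const_mul, this, hint1]
  -- main integral equals C
  have hmain : (∫ x in (0:ℝ)..1, (1 + deriv g x)^2 * Real.exp (2 * V x)) = C := by
    have : (∫ x in (0:ℝ)..1, (1 + deriv g x)^2 * Real.exp (2 * V x))
        = ∫ x in (0:ℝ)..1, C * (1 + deriv g x) := by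
      apply intervalIntegral.integral_congr
      intro x _
      have := hpt x
      linear_combination (1 + deriv g x) * this
    rw [this, intervalIntegral.integral_const_mul, hint1, mul_one]
  -- positivity of ∫ e^{2V}
  have hA : 0 < ∫ x in (0:ℝ)..1, Real.exp (2 * V x) := by
    apply intervalIntegral.intervalIntegral_pos_of_pos
    · exact ((Real.continuous_exp.comp (continuous_const.mul hVc)).intervalIntegrable _ _)
    · intro x; exact Real.exp_pos _
    · norm_num
  set A : ℝ := ∫ x in (0:ℝ)..1, Real.exp (2 * V x)
  set B : ℝ := ∫ x in (0:ℝ)..1, Real.exp (-(2 * V x))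
  rw [hmain]
  have hCne : C ≠ 0 := by
    intro hc; rw [hc, zero_mul] at hCB; norm_num at hCB
  have hBne : B ≠ 0 := by
    intro hbz; rw [hbz, mul_zero] at hCB; norm_num at hCB
  field_simp
  nlinarith [hCB, hA]
end

section
/- Let η > 0, let b₊, b₋ : ℝ → ℝ be smooth, 1-periodic functions with ∫₀¹ b₊(x) dx = 0 and ∫₀¹ b₋(x) dx = 0, and let b : ℝ → ℝ be smooth with b(x) = b₊(x − η) for x > η and b(x) = b₋(x + η) for x < −η. Set V(x) = ∫₀ˣ b(y) dy, λ₊ = ∫_η^{η+1} e^{2V(x)} dx, λ₋ = ∫_{−η−1}^{−η} e^{2V(x)} dx, C₊² = ( λ₊ · ∫_η^{η+1} e^{−2V(x)} dx )^{−1}, C₋² = ( λ₋ · ∫_{−η−1}^{−η} e^{−2V(x)} dx )^{−1}, and p₊ = C₊² λ₊ / (C₊² λ₊ + C₋² λ₋). Then for every c > 0 there exist K > 0 and ε₀ ∈ (0,1] such that for all ε ∈ (0, ε₀], all a, a' ∈ [√ε − cε, √ε + cε], and all x ∈ ℝ with |x| ≤ cε, one has | ( ∫_{−a}^{x} e^{−2V(y/ε)}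 dy ) / ( ∫_{−a}^{a'} e^{−2V(y/ε)} dy ) − p₊ | ≤ K √ε. -/
open MeasureTheory intervalIntegral Set

lemma per_bound {f : ℝ → ℝ} (hf : Continuous f) (hper : Function.Periodic f 1) :
    ∃ M > 0, ∀ y, |f y| ≤ M := by
  obtain ⟨C, hC⟩ := (isCompact_Icc (a := (0:ℝ)) (b := 1)).exists_bound_of_continuousOn
    hf.continuousOn
  refine ⟨C + 1, ?_, fun y => ?_⟩
  · have := hC 0 (by constructor <;> norm_num)
    have h0 : (0:ℝ) ≤ ‖f 0‖ := norm_nonneg _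
    linarith
  · have hfr : f (y - (⌊y⌋ : ℝ)) = f y := by
      have := hper.sub_zsmul_eq (x := y) ⌊y⌋
      simpa using this
    have hmem : y - (⌊y⌋ : ℝ) ∈ Icc (0:ℝ) 1 := by
      constructor
      · linarith [Int.floor_le y]
      · linarith [Int.lt_floor_add_one y]
    have := hC _ hmem
    rw [hfr] at this
    calc |f y| ≤ C := this
      _ ≤ C + 1 := by linarith

lemma avg_est {f : ℝ → ℝ} (hf : Continuous f) (hper : Function.Periodic f 1)
    {M : ℝ} (hM : ∀ y, |f y| ≤ M) {T : ℝ} (hT : 0 ≤ T) :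
    |(∫ y in (0:ℝ)..T, f y) - T * (∫ y in (0:ℝ)..1, f y)| ≤ 2 * M := by
  set m := ∫ y in (0:ℝ)..1, f y with hm
  have hint : ∀ t₁ t₂ : ℝ, IntervalIntegrable f volume t₁ t₂ := fun t₁ t₂ =>
    hf.intervalIntegrable _ _
  have h1 : (∫ y in (0:ℝ)..(⌊T⌋ : ℝ), f y) = (⌊T⌋ : ℝ) * m := by
    have := hper.intervalIntegral_add_zsmul_eq ⌊T⌋ 0 hint
    simpa [zsmul_eq_mul] using this
  have hsplit : (∫ y in (0:ℝ)..T, f y)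
      = (∫ y in (0:ℝ)..(⌊T⌋ : ℝ), f y) + ∫ y in (⌊T⌋ : ℝ)..T, f y :=
    (integral_add_adjacent_intervals (hint _ _) (hint _ _)).symm
  have hfl1 : (⌊T⌋ : ℝ) ≤ T := Int.floor_le T
  have hfl2 : T - (⌊T⌋ : ℝ) ≤ 1 := by linarith [Int.lt_floor_add_one T]
  have h2 : |∫ y in (⌊T⌋ : ℝ)..T, f y| ≤ M := by
    have := intervalIntegral.norm_integral_le_of_norm_le_const
      (a := (⌊T⌋ : ℝ)) (b := T) (C := M) (f := f) (fun x _ => hM x)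
    rw [Real.norm_eq_abs] at this
    calc |∫ y in (⌊T⌋ : ℝ)..T, f y| ≤ M * |T - (⌊T⌋ : ℝ)| := this
      _ ≤ M * 1 := by
          apply mul_le_mul_of_nonneg_left _ ((abs_nonneg (f 0)).trans (hM 0))
          rw [abs_of_nonneg (by linarith)]; linarith
      _ = M := mul_one M
  have hmM : |m| ≤ M := by
    have := intervalIntegral.norm_integral_le_of_norm_le_const
      (a := (0:ℝ)) (b := 1) (C := M) (f := f) (fun x _ => hM x)
    rw [Real.norm_eq_abs] at this
    simpa using this
  have h3 : |(T - (⌊T⌋ : ℝ)) * m| ≤ M := by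
    rw [abs_mul]
    calc |T - (⌊T⌋ : ℝ)| * |m| ≤ 1 * M := by
          apply mul_le_mul _ hmM (abs_nonneg _) zero_le_one
          rw [abs_of_nonneg (by linarith)]; linarith
      _ = M := one_mul M
  calc |(∫ y in (0:ℝ)..T, f y) - T * m|
      = |(∫ y in (⌊T⌋ : ℝ)..T, f y) - (T - (⌊T⌋ : ℝ)) * m| := by
        rw [hsplit, h1]; ring_nf
    _ ≤ |∫ y in (⌊T⌋ : ℝ)..T, f y| + |(T - (⌊T⌋ : ℝ)) * m| := abs_sub _ _
    _ ≤ M + M := add_le_add h2 h3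
    _ = 2 * M := by ring

lemma avg_est_neg {f : ℝ → ℝ} (hf : Continuous f) (hper : Function.Periodic f 1)
    {M : ℝ} (hM : ∀ y, |f y| ≤ M) {S : ℝ} (hS : 0 ≤ S) :
    |(∫ y in (-S)..(0:ℝ), f y) - S * (∫ y in (-1:ℝ)..0, f y)| ≤ 2 * M := by
  have hper' : Function.Periodic (fun t => f (-t)) 1 := by
    intro t
    simp only []
    have : -(t + 1) = -t - 1 := by ring
    rw [this, hper.sub_eq]
  have h1 : (∫ y in (0:ℝ)..S, f (-y)) = ∫ y in (-S)..(0:ℝ), f y := by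
    simpa using intervalIntegral.integral_comp_neg (a := (0:ℝ)) (b := S) f
  have h2 : (∫ y in (0:ℝ)..1, f (-y)) = ∫ y in (-1:ℝ)..0, f y := by
    simpa using intervalIntegral.integral_comp_neg (a := (0:ℝ)) (b := 1) f
  have := avg_est (f := fun t => f (-t)) (hf.comp continuous_neg) hper'
    (fun y => hM (-y)) hS
  rw [h1, h2] at this
  exact this

set_option maxHeartbeats 2000000 in
/-- **Exit probability estimate via the scale function.**
With the interface setup, for the rescaled scale density `e^{-2V(y/ε)}`, the
ratio `(∫_{-a}^x e^{-2V(y/ε)} dy) / (∫_{-a}^{a'} e^{-2V(y/ε)} dy)` converges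
to `p₊ = C₊²λ₊ / (C₊²λ₊ + C₋²λ₋)` at rate `√ε`, uniformly over starting points
`|x| ≤ cε` and endpoints `a, a' ∈ [√ε - cε, √ε + cε]`. -/
theorem stmt_6 (η : ℝ) (hη : 0 < η)
    (bp bm : ℝ → ℝ) (hbp : ContDiff ℝ (⊤ : ℕ∞) bp) (hbm : ContDiff ℝ (⊤ : ℕ∞) bm)
    (hbpper : ∀ x, bp (x + 1) = bp x) (hbmper : ∀ x, bm (x + 1) = bm x)
    (hbpcent : (∫ x in (0:ℝ)..1, bp x) = 0)
    (hbmcent : (∫ x in (0:ℝ)..1, bm x) = 0)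
    (b : ℝ → ℝ) (hb : ContDiff ℝ (⊤ : ℕ∞) b)
    (hbplus : ∀ x, η < x → b x = bp (x - η))
    (hbminus : ∀ x, x < -η → b x = bm (x + η))
    (V : ℝ → ℝ) (hV : ∀ x, V x = ∫ y in (0:ℝ)..x, b y)
    (lamp lamm Cp2 Cm2 pplus : ℝ)
    (hlamp : lamp = ∫ x in η..(η+1), Real.exp (2 * V x))
    (hlamm : lamm = ∫ x in (-η-1)..(-η), Real.exp (2 * V x))
    (hCp2 : Cp2 = (lamp * ∫ x in η..(η+1), Real.exp (-(2 * V x)))⁻¹)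
    (hCm2 : Cm2 = (lamm * ∫ x in (-η-1)..(-η), Real.exp (-(2 * V x)))⁻¹)
    (hpplus : pplus = Cp2 * lamp / (Cp2 * lamp + Cm2 * lamm)) :
    ∀ c > 0, ∃ K > 0, ∃ ε₀ ∈ Set.Ioc (0:ℝ) 1, ∀ ε ∈ Set.Ioc (0:ℝ) ε₀,
      ∀ a ∈ Set.Icc (Real.sqrt ε - c * ε) (Real.sqrt ε + c * ε),
      ∀ a' ∈ Set.Icc (Real.sqrt ε - c * ε) (Real.sqrt ε + c * ε),
      ∀ x : ℝ, |x| ≤ c * ε →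
        |(∫ y in (-a)..x, Real.exp (-(2 * V (y / ε)))) /
            (∫ y in (-a)..a', Real.exp (-(2 * V (y / ε)))) - pplus|
          ≤ K * Real.sqrt ε := by
  intro c hc
  -- basic continuity
  have hbc : Continuous b := hb.continuous
  have hbpc : Continuous bp := hbp.continuous
  have hbmc : Continuous bm := hbm.continuous
  have hVc : Continuous V := by
    have : V = fun x => ∫ y in (0:ℝ)..x, b y := funext hV
    rw [this]
    exact intervalIntegral.continuous_primitive (fun u v => hbc.intervalIntegrable u v) 0
  set g : ℝ → ℝ := fun y => Real.exp (-(2 * V y)) with hg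
  have hgc : Continuous g := Real.continuous_exp.comp (continuous_const.mul hVc).neg
  have hgpos : ∀ y, 0 < g y := fun y => Real.exp_pos _
  -- periodic primitives
  set Wp : ℝ → ℝ := fun t => ∫ y in (0:ℝ)..t, bp y with hWp
  set Wm : ℝ → ℝ := fun t => ∫ y in (0:ℝ)..t, bm y with hWm
  have hWpc : Continuous Wp :=
    intervalIntegral.continuous_primitive (fun u v => hbpc.intervalIntegrable u v) 0
  have hWmc : Continuous Wm :=
    intervalIntegral.continuous_primitive (fun u v => hbmc.intervalIntegrable u v) 0
  have hWpper : Function.Periodic Wp 1 := by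
    intro t
    have h1 : (∫ y in t..(t+1), bp y) = ∫ y in (0:ℝ)..(0+1:ℝ), bp y :=
      Function.Periodic.intervalIntegral_add_eq hbpper t 0
    have h2 : Wp t + (∫ y in t..(t+1), bp y) = Wp (t+1) :=
      integral_add_adjacent_intervals (hbpc.intervalIntegrable _ _)
        (hbpc.intervalIntegrable _ _)
    rw [h1] at h2
    simp only [zero_add] at h2
    rw [hbpcent] at h2
    linarith
  have hWmper : Function.Periodic Wm 1 := by
    intro t
    have h1 : (∫ y in t..(t+1), bm y) = ∫ y in (0:ℝ)..(0+1:ℝ), bm y :=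
      Function.Periodic.intervalIntegral_add_eq hbmper t 0
    have h2 : Wm t + (∫ y in t..(t+1), bm y) = Wm (t+1) :=
      integral_add_adjacent_intervals (hbmc.intervalIntegrable _ _)
        (hbmc.intervalIntegrable _ _)
    rw [h1] at h2
    simp only [zero_add] at h2
    rw [hbmcent] at h2
    linarith
  -- b agrees with shifted bp / bm on closed half-lines
  have hbrt : Set.EqOn b (fun t => bp (t - η)) (Set.Ici η) := by
    have h1 : Set.EqOn b (fun t => bp (t - η)) (Set.Ioi η) := fun t ht => hbplus t ht
    have := h1.closure hbc (hbpc.comp (continuous_id.sub continuous_const))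
    rwa [closure_Ioi] at this
  have hblt : Set.EqOn b (fun t => bm (t + η)) (Set.Iic (-η)) := by
    have h1 : Set.EqOn b (fun t => bm (t + η)) (Set.Iio (-η)) := fun t ht => hbminus t ht
    have := h1.closure hbc (hbmc.comp (continuous_id.add continuous_const))
    rwa [closure_Iio] at this
  -- structure of V on the right and left
  have hVright : ∀ y, η ≤ y → V y = V η + Wp (y - η) := by
    intro y hy
    have hadd : (∫ t in (0:ℝ)..η, b t) + (∫ t in η..y, b t) = ∫ t in (0:ℝ)..y, b t :=
      integral_add_adjacent_intervals (hbc.intervalIntegrable _ _) (hbc.intervalIntegrable _ _)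
    have hcongr : (∫ t in η..y, b t) = ∫ t in η..y, bp (t - η) := by
      apply intervalIntegral.integral_congr
      intro t ht
      rw [Set.uIcc_of_le hy] at ht
      exact hbrt ht.1
    have hsub : (∫ t in η..y, bp (t - η)) = ∫ t in (η - η)..(y - η), bp t :=
      intervalIntegral.integral_comp_sub_right _ η
    rw [hV y, hV η, ← hadd, hcongr, hsub, sub_self]
  have hVleft : ∀ y, y ≤ -η → V y = V (-η) + Wm (y + η) := by
    intro y hy
    have hadd : (∫ t in (0:ℝ)..(-η), b t) + (∫ t in (-η)..y, b t) = ∫ t in (0:ℝ)..y, b t :=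
      integral_add_adjacent_intervals (hbc.intervalIntegrable _ _) (hbc.intervalIntegrable _ _)
    have hcongr : (∫ t in (-η)..y, b t) = ∫ t in (-η)..y, bm (t + η) := by
      apply intervalIntegral.integral_congr
      intro t ht
      rw [Set.uIcc_of_ge hy] at ht
      exact hblt ht.2
    have hsub : (∫ t in (-η)..y, bm (t + η)) = ∫ t in (0:ℝ)..(y + η), bm t := by
      have h := intervalIntegral.integral_comp_sub_right (a := -η) (b := y) bm (-η)
      simp only [sub_neg_eq_add, neg_add_cancel] at h
      exact h
    rw [hV y, hV (-η), ← hadd, hcongr, hsub]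
  -- periodic densities
  set gp : ℝ → ℝ := fun t => Real.exp (-(2 * (V η + Wp t))) with hgp
  set gm : ℝ → ℝ := fun t => Real.exp (-(2 * (V (-η) + Wm t))) with hgm
  have hgpc : Continuous gp :=
    Real.continuous_exp.comp (continuous_const.mul (continuous_const.add hWpc)).neg
  have hgmc : Continuous gm :=
    Real.continuous_exp.comp (continuous_const.mul (continuous_const.add hWmc)).neg
  have hgpper : Function.Periodic gp 1 := by
    intro t; simp only [hgp, hWpper t]
  have hgmper : Function.Periodic gm 1 := by
    intro t; simp only [hgm, hWmper t]
  have hgright : ∀ y, η ≤ y → g y = gp (y - η) := by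
    intro y hy
    simp only [hg, hgp, hVright y hy]
  have hgleft : ∀ y, y ≤ -η → g y = gm (y + η) := by
    intro y hy
    simp only [hg, hgm, hVleft y hy]
  -- the two means
  obtain ⟨mP, hmP⟩ : ∃ r : ℝ, r = ∫ t in (0:ℝ)..1, gp t := ⟨_, rfl⟩
  obtain ⟨mM, hmM⟩ : ∃ r : ℝ, r = ∫ t in (-1:ℝ)..0, gm t := ⟨_, rfl⟩
  have hmeanP : (∫ x in η..(η+1), Real.exp (-(2 * V x))) = mP := by
    have hcongr : (∫ x in η..(η+1), Real.exp (-(2 * V x))) = ∫ x in η..(η+1), gp (x - η) := by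
      apply intervalIntegral.integral_congr
      intro t ht
      rw [Set.uIcc_of_le (by linarith : η ≤ η + 1)] at ht
      exact hgright t ht.1
    have hsub : (∫ x in η..(η+1), gp (x - η)) = ∫ x in (η - η)..(η + 1 - η), gp x :=
      intervalIntegral.integral_comp_sub_right _ η
    rw [hcongr, hsub, sub_self, show η + 1 - η = (1:ℝ) by ring]
    exact hmP.symm
  have hmeanM : (∫ x in (-η-1)..(-η), Real.exp (-(2 * V x))) = mM := by
    have hcongr : (∫ x in (-η-1)..(-η), Real.exp (-(2 * V x)))
        = ∫ x in (-η-1)..(-η), gm (x + η) := by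
      apply intervalIntegral.integral_congr
      intro t ht
      rw [Set.uIcc_of_le (by linarith : -η - 1 ≤ -η)] at ht
      exact hgleft t ht.2
    have hsub : (∫ x in (-η-1)..(-η), gm (x - (-η))) = ∫ x in (-η-1-(-η))..(-η-(-η)), gm x :=
      intervalIntegral.integral_comp_sub_right _ (-η)
    simp only [sub_neg_eq_add] at hsub
    rw [hcongr, hsub, show -η - 1 + η = (-1:ℝ) by ring, show -η + η = (0:ℝ) by ring, hmM]
  have hmPpos : 0 < mP := by
    rw [hmP]
    apply intervalIntegral.integral_pos one_pos hgpc.continuousOn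
      (fun t _ => (Real.exp_pos _).le)
    exact ⟨0, by norm_num, Real.exp_pos _⟩
  have hmMpos : 0 < mM := by
    rw [hmM]
    apply intervalIntegral.integral_pos (by norm_num : (-1:ℝ) < 0) hgmc.continuousOn
      (fun t _ => (Real.exp_pos _).le)
    exact ⟨0, by norm_num, Real.exp_pos _⟩
  have hlamppos : 0 < lamp := by
    rw [hlamp]
    apply intervalIntegral.integral_pos (by linarith : η < η + 1)
      (Real.continuous_exp.comp (continuous_const.mul hVc)).continuousOn
      (fun t _ => (Real.exp_pos _).le)
    exact ⟨η, by constructor <;> linarith, Real.exp_pos _⟩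
  have hlammpos : 0 < lamm := by
    rw [hlamm]
    apply intervalIntegral.integral_pos (by linarith : -η - 1 < -η)
      (Real.continuous_exp.comp (continuous_const.mul hVc)).continuousOn
      (fun t _ => (Real.exp_pos _).le)
    exact ⟨-η, by constructor <;> linarith, Real.exp_pos _⟩
  obtain ⟨μ, hμ⟩ : ∃ r : ℝ, r = mP + mM := ⟨_, rfl⟩
  have hμpos : 0 < μ := by rw [hμ]; exact add_pos hmPpos hmMpos
  have hpp : pplus = mM / μ := by
    rw [hpplus, hCp2, hCm2, hmeanP, hmeanM, hμ]
    rw [mul_inv, mul_inv]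
    field_simp
    ring
  -- global bound on g
  obtain ⟨MP, hMPpos, hMPb⟩ := per_bound hgpc hgpper
  obtain ⟨MM, hMMpos, hMMb⟩ := per_bound hgmc hgmper
  obtain ⟨M0, hM0b⟩ :=
    (isCompact_Icc (a := -η) (b := η)).exists_bound_of_continuousOn hgc.continuousOn
  obtain ⟨M, hM⟩ : ∃ r : ℝ, r = max (max MP MM) M0 := ⟨_, rfl⟩
  have hMpos : 0 < M := by
    rw [hM]; exact lt_of_lt_of_le hMPpos ((le_max_left _ _).trans (le_max_left _ _))
  have hgpM : ∀ y, |gp y| ≤ M := by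
    intro y; rw [hM]; exact (hMPb y).trans ((le_max_left _ _).trans (le_max_left _ _))
  have hgmM : ∀ y, |gm y| ≤ M := by
    intro y; rw [hM]; exact (hMMb y).trans ((le_max_right _ _).trans (le_max_left _ _))
  have hgM : ∀ y, |g y| ≤ M := by
    intro y
    rcases le_or_gt η y with hy | hy
    · rw [hgright y hy]; exact hgpM _
    rcases le_or_gt y (-η) with hy' | hy'
    · rw [hgleft y hy']; exact hgmM _
    · have h := hM0b y ⟨hy'.le, hy.le⟩
      rw [Real.norm_eq_abs] at h
      rw [hM]; exact h.trans (le_max_right _ _)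
  have hmPM : mP ≤ M := by
    have h := intervalIntegral.norm_integral_le_of_norm_le_const
      (a := (0:ℝ)) (b := 1) (C := M) (f := gp) (fun t _ => hgpM t)
    rw [Real.norm_eq_abs, ← hmP] at h
    rw [show |(1:ℝ) - 0| = 1 by norm_num, mul_one] at h
    exact (le_abs_self mP).trans h
  have hmMM : mM ≤ M := by
    have h := intervalIntegral.norm_integral_le_of_norm_le_const
      (a := (-1:ℝ)) (b := 0) (C := M) (f := gm) (fun t _ => hgmM t)
    rw [Real.norm_eq_abs, ← hmM] at h
    rw [show |(0:ℝ) - (-1)| = 1 by norm_num, mul_one] at h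
    exact (le_abs_self mM).trans h
  -- constants
  obtain ⟨C₁, hC₁⟩ : ∃ r : ℝ, r = M * (2 * η + 2) := ⟨_, rfl⟩
  have hC₁pos : 0 < C₁ := by rw [hC₁]; exact mul_pos hMpos (by linarith)
  obtain ⟨C₃, hC₃⟩ : ∃ r : ℝ, r = 2 * c * mM * mP + (C₁ + M * c) * μ + 2 * C₁ * mM := ⟨_, rfl⟩
  have hC₃pos : 0 < C₃ := by
    rw [hC₃]
    linarith [mul_pos (mul_pos (mul_pos two_pos hc) hmMpos) hmPpos,
      mul_pos (add_pos hC₁pos (mul_pos hMpos hc)) hμpos,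
      mul_pos (mul_pos two_pos hC₁pos) hmMpos]
  have hden1pos : (0:ℝ) < c + η + 1 := by linarith
  have hden2pos : (0:ℝ) < 2 * (c * μ + 2 * C₁) := by linarith [mul_pos hc hμpos, hC₁pos]
  refine ⟨2 * C₃ / μ ^ 2, div_pos (by linarith) (pow_pos hμpos 2),
    min 1 (min ((c + η + 1)⁻¹ ^ 2) ((μ / (2 * (c * μ + 2 * C₁))) ^ 2)),
    ⟨lt_min one_pos (lt_min (pow_pos (inv_pos.2 hden1pos) 2)
      (pow_pos (div_pos hμpos hden2pos) 2)), min_le_left _ _⟩,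
    ?_⟩
  intro ε hε a ha a' ha' x hx
  have hε0 : 0 < ε := hε.1
  have hsε : 0 < Real.sqrt ε := Real.sqrt_pos.2 hε0
  have hsq : Real.sqrt ε * Real.sqrt ε = ε := Real.mul_self_sqrt hε0.le
  have hεs1 : Real.sqrt ε ≤ (c + η + 1)⁻¹ := by
    have h : ε ≤ ((c + η + 1)⁻¹) ^ 2 :=
      hε.2.trans ((min_le_right _ _).trans (min_le_left _ _))
    calc Real.sqrt ε ≤ Real.sqrt (((c + η + 1)⁻¹) ^ 2) := Real.sqrt_le_sqrt h
      _ = (c + η + 1)⁻¹ := Real.sqrt_sq (inv_pos.2 hden1pos).le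
  have hεs2 : Real.sqrt ε ≤ μ / (2 * (c * μ + 2 * C₁)) := by
    have h : ε ≤ (μ / (2 * (c * μ + 2 * C₁))) ^ 2 :=
      hε.2.trans ((min_le_right _ _).trans (min_le_right _ _))
    calc Real.sqrt ε ≤ Real.sqrt ((μ / (2 * (c * μ + 2 * C₁))) ^ 2) := Real.sqrt_le_sqrt h
      _ = μ / (2 * (c * μ + 2 * C₁)) := Real.sqrt_sq (div_pos hμpos hden2pos).le
  have hkey : (c + η) * Real.sqrt ε ≤ 1 := by
    have h1 : (c + η) * Real.sqrt ε ≤ (c + η) * (c + η + 1)⁻¹ :=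
      mul_le_mul_of_nonneg_left hεs1 (by linarith)
    have h2 : (c + η) * (c + η + 1)⁻¹ ≤ 1 := by
      rw [← div_eq_mul_inv]
      exact div_le_one_of_le₀ (by linarith) (by linarith)
    linarith
  have haη : η * ε ≤ Real.sqrt ε - c * ε := by
    have h1 : (c + η) * ε ≤ Real.sqrt ε := by
      calc (c + η) * ε = ((c + η) * Real.sqrt ε) * Real.sqrt ε := by rw [mul_assoc, hsq]
        _ ≤ 1 * Real.sqrt ε := mul_le_mul_of_nonneg_right hkey hsε.le
        _ = Real.sqrt ε := one_mul _
    linarith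
  have hse2' : (c * μ + 2 * C₁) * Real.sqrt ε ≤ μ / 2 := by
    rw [le_div_iff₀ hden2pos] at hεs2
    linarith [hεs2]
  -- rewrite the goal integrals in terms of g
  have hGg : ∀ u v : ℝ, (∫ y in u..v, Real.exp (-(2 * V (y / ε)))) = ∫ y in u..v, g (y / ε) := by
    intro u v; simp only [hg]
  have hGc : Continuous fun y => g (y / ε) := hgc.comp (continuous_id.div_const ε)
  have hGint : ∀ u v : ℝ, IntervalIntegrable (fun y => g (y / ε)) volume u v := fun u v =>
    hGc.intervalIntegrable u v
  -- right-hand estimate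
  have hBgen : ∀ w : ℝ, Real.sqrt ε - c * ε ≤ w →
      |(∫ y in (0:ℝ)..w, g (y / ε)) - w * mP| ≤ C₁ * ε := by
    intro w hw1
    have hwη : η ≤ w / ε := (le_div_iff₀ hε0).2 (by linarith)
    have hwe : ε * (w / ε) = w := by field_simp
    have hstep1 : (∫ y in (0:ℝ)..w, g (y / ε)) = ε * ∫ t in (0:ℝ)..(w / ε), g t := by
      have h := intervalIntegral.integral_comp_div (a := (0:ℝ)) (b := w) (c := ε) g hε0.ne'
      rw [h, zero_div, smul_eq_mul]
    have hsplit : (∫ t in (0:ℝ)..(w / ε), g t)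
        = (∫ t in (0:ℝ)..η, g t) + ∫ t in η..(w / ε), g t :=
      (integral_add_adjacent_intervals (hgc.intervalIntegrable _ _)
        (hgc.intervalIntegrable _ _)).symm
    have hcongr : (∫ t in η..(w / ε), g t) = ∫ t in η..(w / ε), gp (t - η) := by
      apply intervalIntegral.integral_congr
      intro t ht
      rw [Set.uIcc_of_le hwη] at ht
      exact hgright t ht.1
    have hsub : (∫ t in η..(w / ε), gp (t - η)) = ∫ t in (η - η)..(w / ε - η), gp t :=
      intervalIntegral.integral_comp_sub_right _ η
    have havg : |(∫ t in (0:ℝ)..(w / ε - η), gp t) - (w / ε - η) * mP| ≤ 2 * M := by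
      have h := avg_est hgpc hgpper hgpM (by linarith : (0:ℝ) ≤ w / ε - η)
      rw [← hmP] at h
      exact h
    have h0η : |∫ t in (0:ℝ)..η, g t| ≤ M * η := by
      have h := intervalIntegral.norm_integral_le_of_norm_le_const
        (a := (0:ℝ)) (b := η) (C := M) (f := g) (fun t _ => hgM t)
      rw [Real.norm_eq_abs, show |η - 0| = η by rw [sub_zero]; exact abs_of_pos hη] at h
      exact h
    have heq : (∫ y in (0:ℝ)..w, g (y / ε)) - w * mP
        = ε * (((∫ t in (0:ℝ)..η, g t) - η * mP)
            + ((∫ t in (0:ℝ)..(w / ε - η), gp t) - (w / ε - η) * mP)) := by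
      rw [hstep1, hsplit, hcongr, hsub, sub_self]
      linear_combination mP * hwe
    rw [heq, abs_mul, abs_of_pos hε0]
    have hb1 : |(∫ t in (0:ℝ)..η, g t) - η * mP| ≤ M * η + η * mP := by
      calc |(∫ t in (0:ℝ)..η, g t) - η * mP|
          ≤ |∫ t in (0:ℝ)..η, g t| + |η * mP| := abs_sub _ _
        _ ≤ M * η + η * mP := by
            apply add_le_add h0η
            rw [abs_of_pos (mul_pos hη hmPpos)]
    have hb2 : |((∫ t in (0:ℝ)..η, g t) - η * mP)
        + ((∫ t in (0:ℝ)..(w / ε - η), gp t) - (w / ε - η) * mP)|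
        ≤ (M * η + η * mP) + 2 * M :=
      (abs_add_le _ _).trans (add_le_add hb1 havg)
    calc ε * |((∫ t in (0:ℝ)..η, g t) - η * mP)
        + ((∫ t in (0:ℝ)..(w / ε - η), gp t) - (w / ε - η) * mP)|
        ≤ ε * ((M * η + η * mP) + 2 * M) := mul_le_mul_of_nonneg_left hb2 hε0.le
      _ ≤ C₁ * ε := by
          have h1 : η * mP ≤ η * M := mul_le_mul_of_nonneg_left hmPM hη.le
          have h2 : (M * η + η * mP) + 2 * M ≤ M * (2 * η + 2) := by linarith
          have h3 := mul_le_mul_of_nonneg_left h2 hε0.le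
          rw [hC₁]
          linarith [h3]
  -- left-hand estimate
  have hAgen : ∀ w : ℝ, Real.sqrt ε - c * ε ≤ w →
      |(∫ y in (-w)..(0:ℝ), g (y / ε)) - w * mM| ≤ C₁ * ε := by
    intro w hw1
    have hwη : η ≤ w / ε := (le_div_iff₀ hε0).2 (by linarith)
    have hwe : ε * (w / ε) = w := by field_simp
    have hstep1 : (∫ y in (-w)..(0:ℝ), g (y / ε)) = ε * ∫ t in ((-w) / ε)..(0:ℝ), g t := by
      have h := intervalIntegral.integral_comp_div (a := -w) (b := (0:ℝ)) (c := ε) g hε0.ne'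
      rw [h, zero_div, smul_eq_mul]
    have hsplit : (∫ t in ((-w) / ε)..(0:ℝ), g t)
        = (∫ t in ((-w) / ε)..(-η), g t) + ∫ t in (-η)..(0:ℝ), g t :=
      (integral_add_adjacent_intervals (hgc.intervalIntegrable _ _)
        (hgc.intervalIntegrable _ _)).symm
    have hwle : (-w) / ε ≤ -η := by
      rw [neg_div]
      linarith [hwη]
    have hcongr : (∫ t in ((-w) / ε)..(-η), g t) = ∫ t in ((-w) / ε)..(-η), gm (t + η) := by
      apply intervalIntegral.integral_congr
      intro t ht
      rw [Set.uIcc_of_le hwle] at ht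
      exact hgleft t ht.2
    have hsub : (∫ t in ((-w) / ε)..(-η), gm (t + η)) = ∫ t in ((-w) / ε + η)..(0:ℝ), gm t := by
      have h := intervalIntegral.integral_comp_sub_right (a := (-w) / ε) (b := -η) gm (-η)
      simp only [sub_neg_eq_add, neg_add_cancel] at h
      exact h
    have hbnd : (-w) / ε + η = -(w / ε - η) := by ring
    have havg : |(∫ t in (-(w / ε - η))..(0:ℝ), gm t) - (w / ε - η) * mM| ≤ 2 * M := by
      have h := avg_est_neg hgmc hgmper hgmM (by linarith : (0:ℝ) ≤ w / ε - η)
      rw [← hmM] at h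
      exact h
    have h0η : |∫ t in (-η)..(0:ℝ), g t| ≤ M * η := by
      have h := intervalIntegral.norm_integral_le_of_norm_le_const
        (a := -η) (b := (0:ℝ)) (C := M) (f := g) (fun t _ => hgM t)
      rw [Real.norm_eq_abs, show |(0:ℝ) - (-η)| = η by rw [sub_neg_eq_add, zero_add]; exact abs_of_pos hη] at h
      exact h
    have heq : (∫ y in (-w)..(0:ℝ), g (y / ε)) - w * mM
        = ε * (((∫ t in (-η)..(0:ℝ), g t) - η * mM)
            + ((∫ t in (-(w / ε - η))..(0:ℝ), gm t) - (w / ε - η) * mM)) := by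
      rw [hstep1, hsplit, hcongr, hsub, hbnd]
      linear_combination mM * hwe
    rw [heq, abs_mul, abs_of_pos hε0]
    have hb1 : |(∫ t in (-η)..(0:ℝ), g t) - η * mM| ≤ M * η + η * mM := by
      calc |(∫ t in (-η)..(0:ℝ), g t) - η * mM|
          ≤ |∫ t in (-η)..(0:ℝ), g t| + |η * mM| := abs_sub _ _
        _ ≤ M * η + η * mM := by
            apply add_le_add h0η
            rw [abs_of_pos (mul_pos hη hmMpos)]
    have hb2 : |((∫ t in (-η)..(0:ℝ), g t) - η * mM)
        + ((∫ t in (-(w / ε - η))..(0:ℝ), gm t) - (w / ε - η) * mM)|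
        ≤ (M * η + η * mM) + 2 * M :=
      (abs_add_le _ _).trans (add_le_add hb1 havg)
    calc ε * |((∫ t in (-η)..(0:ℝ), g t) - η * mM)
        + ((∫ t in (-(w / ε - η))..(0:ℝ), gm t) - (w / ε - η) * mM)|
        ≤ ε * ((M * η + η * mM) + 2 * M) := mul_le_mul_of_nonneg_left hb2 hε0.le
      _ ≤ C₁ * ε := by
          have h1 : η * mM ≤ η * M := mul_le_mul_of_nonneg_left hmMM hη.le
          have h2 : (M * η + η * mM) + 2 * M ≤ M * (2 * η + 2) := by linarith
          have h3 := mul_le_mul_of_nonneg_left h2 hε0.le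
          rw [hC₁]
          linarith [h3]
  -- assemble
  obtain ⟨A, hA⟩ : ∃ r : ℝ, r = ∫ y in (-a)..(0:ℝ), g (y / ε) := ⟨_, rfl⟩
  obtain ⟨B, hB⟩ : ∃ r : ℝ, r = ∫ y in (0:ℝ)..a', g (y / ε) := ⟨_, rfl⟩
  obtain ⟨X, hX⟩ : ∃ r : ℝ, r = ∫ y in (0:ℝ)..x, g (y / ε) := ⟨_, rfl⟩
  have hAe : |A - a * mM| ≤ C₁ * ε := by rw [hA]; exact hAgen a ha.1
  have hBe : |B - a' * mP| ≤ C₁ * ε := by rw [hB]; exact hBgen a' ha'.1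
  have hXe : |X| ≤ M * (c * ε) := by
    have h := intervalIntegral.norm_integral_le_of_norm_le_const
      (a := (0:ℝ)) (b := x) (C := M) (f := fun y => g (y / ε)) (fun t _ => hgM (t / ε))
    rw [Real.norm_eq_abs, ← hX, sub_zero] at h
    calc |X| ≤ M * |x| := h
      _ ≤ M * (c * ε) := mul_le_mul_of_nonneg_left hx hMpos.le
  have hN : (∫ y in (-a)..x, g (y / ε)) = A + X := by
    rw [hA, hX]
    exact (integral_add_adjacent_intervals (hGint _ _) (hGint _ _)).symm
  have hD : (∫ y in (-a)..a', g (y / ε)) = A + B := by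
    rw [hA, hB]
    exact (integral_add_adjacent_intervals (hGint _ _) (hGint _ _)).symm
  have hDlb : Real.sqrt ε * (μ / 2) ≤ A + B := by
    have h1 : a * mM - C₁ * ε ≤ A := by linarith [(abs_le.1 hAe).1]
    have h2 : a' * mP - C₁ * ε ≤ B := by linarith [(abs_le.1 hBe).1]
    have h3 : (Real.sqrt ε - c * ε) * mM ≤ a * mM :=
      mul_le_mul_of_nonneg_right ha.1 hmMpos.le
    have h4 : (Real.sqrt ε - c * ε) * mP ≤ a' * mP :=
      mul_le_mul_of_nonneg_right ha'.1 hmPpos.le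
    have h6 : (c * μ + 2 * C₁) * ε ≤ μ / 2 * Real.sqrt ε := by
      calc (c * μ + 2 * C₁) * ε = ((c * μ + 2 * C₁) * Real.sqrt ε) * Real.sqrt ε := by
            rw [mul_assoc, hsq]
        _ ≤ μ / 2 * Real.sqrt ε := mul_le_mul_of_nonneg_right hse2' hsε.le
    have h7 : (Real.sqrt ε - c * ε) * mM + (Real.sqrt ε - c * ε) * mP - 2 * C₁ * ε
        = Real.sqrt ε * μ - (c * μ + 2 * C₁) * ε := by rw [hμ]; ring
    linarith [h1, h2, h3, h4, h6, h7]
  have hDpos : 0 < A + B := lt_of_lt_of_le (mul_pos hsε (by linarith)) hDlb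
  have hnum : |(A + X) * μ - mM * (A + B)| ≤ C₃ * ε := by
    have hid : (A + X) * μ - mM * (A + B)
        = mM * mP * (a - a') + ((A - a * mM) + X) * μ
          - mM * ((A - a * mM) + (B - a' * mP)) := by
      rw [hμ]; ring
    have haa' : |a - a'| ≤ 2 * (c * ε) := by
      rw [abs_le]
      constructor
      · linarith [ha.1, ha'.2]
      · linarith [ha.2, ha'.1]
    have t1 : |mM * mP * (a - a')| ≤ mM * mP * (2 * (c * ε)) := by
      rw [abs_mul, abs_mul, abs_of_pos hmMpos, abs_of_pos hmPpos]
      exact mul_le_mul_of_nonneg_left haa' (mul_pos hmMpos hmPpos).le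
    have t2 : |((A - a * mM) + X) * μ| ≤ (C₁ * ε + M * (c * ε)) * μ := by
      rw [abs_mul, abs_of_pos hμpos]
      exact mul_le_mul_of_nonneg_right ((abs_add_le _ _).trans (add_le_add hAe hXe)) hμpos.le
    have t3 : |mM * ((A - a * mM) + (B - a' * mP))| ≤ mM * (C₁ * ε + C₁ * ε) := by
      rw [abs_mul, abs_of_pos hmMpos]
      exact mul_le_mul_of_nonneg_left ((abs_add_le _ _).trans (add_le_add hAe hBe)) hmMpos.le
    have tfin : C₃ * ε = mM * mP * (2 * (c * ε)) + (C₁ * ε + M * (c * ε)) * μ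
        + mM * (C₁ * ε + C₁ * ε) := by
      rw [hC₃]; ring
    calc |(A + X) * μ - mM * (A + B)|
        = |mM * mP * (a - a') + ((A - a * mM) + X) * μ
            - mM * ((A - a * mM) + (B - a' * mP))| := by rw [hid]
      _ ≤ |mM * mP * (a - a') + ((A - a * mM) + X) * μ|
            + |mM * ((A - a * mM) + (B - a' * mP))| := abs_sub _ _
      _ ≤ (|mM * mP * (a - a')| + |((A - a * mM) + X) * μ|)
            + |mM * ((A - a * mM) + (B - a' * mP))| := by
          apply add_le_add_left (abs_add_le _ _)
      _ ≤ C₃ * ε := by rw [tfin]; linarith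
  rw [hGg, hGg, hN, hD, hpp]
  have hμne : μ ≠ 0 := hμpos.ne'
  have hDne : A + B ≠ 0 := hDpos.ne'
  have hfrac : (A + X) / (A + B) - mM / μ
      = ((A + X) * μ - mM * (A + B)) / ((A + B) * μ) := by
    rw [div_sub_div _ _ hDne hμne, mul_comm (A + B) mM]
  rw [hfrac, abs_div, abs_of_pos (mul_pos hDpos hμpos)]
  have hden : Real.sqrt ε * (μ / 2) * μ ≤ (A + B) * μ :=
    mul_le_mul_of_nonneg_right hDlb hμpos.le
  have hfin : C₃ * ε / (Real.sqrt ε * (μ / 2) * μ) = 2 * C₃ / μ ^ 2 * Real.sqrt ε := by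
    rw [div_eq_iff (mul_pos (mul_pos hsε (by linarith : (0:ℝ) < μ / 2)) hμpos).ne']
    field_simp
    linear_combination (-1 : ℝ) * hsq
  calc |(A + X) * μ - mM * (A + B)| / ((A + B) * μ)
      ≤ C₃ * ε / (Real.sqrt ε * (μ / 2) * μ) :=
        div_le_div₀ (mul_pos hC₃pos hε0).le hnum
          (mul_pos (mul_pos hsε (by linarith : (0:ℝ) < μ / 2)) hμpos) hden
    _ = 2 * C₃ / μ ^ 2 * Real.sqrt ε := hfin
end

section
/- Fix λ > 0. For ε ∈ (0,1) define b_V^ε : ℝ → ℝ by b_V^ε(x) = −1/ε for 0 ≤ x ≤ ε, b_V^ε(x) = 1/ε for −ε ≤ x < 0, and b_V^ε(x) = 0 otherwise. Then there exist constants C > 0 and ε₀ ∈ (0,1) such that for every ε ∈ (0, ε₀) the following holds: every bounded function f : ℝ → ℝ that is continuously differentiable on ℝ, twice differentiable at every point x ∉ {−√ε, −ε, 0, ε, √ε}, and satisfies λ f(x) − (1/2) f''(x) − b_V^ε(x) f'(x) = 1_{(−√ε, √ε)}(x) at every such x, satisfies sup_{x ∈ ℝ} |f(x)| ≤ C √ε.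 -/
/-!
A maximum principle for `λ u ≤ u'' / 2 + b u'` with bounded `b` and `u` bounded above: touch
`u` from above by `δ cosh (ν (x - a))` with `ν ^ 2 / 2 + sup |b| ν ≤ λ`; at the contact point the
inequality forces `u ≤ δ cosh (ν (x - a))` everywhere, and `δ → 0` gives `u ≤ 0`. Since the
slope of `u` at the contact point determines the centre `a`, all but finitely many centres keep
the contact point off the finite set where `u''` is unavailable.

Comparing `± f` with an even `C¹` supersolution `g ≥ 0` of
`λ g - g'' / 2 - b g' ≥ 1_{(-√ε, √ε)}` then gives `|f| ≤ g`. On `[0, ε]` the drift pulls towards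
`0`, against `g`, and `g` has to solve `-g'' / 2 + g' / ε = 1`, i.e. `g' = ε (1 - exp (2 x / ε))`;
on `[ε, √ε]` `g` is a parabola with `g'' = -2`; beyond `√ε` it decays like `exp (-√(2 λ) x)`.
Matching values and slopes makes the height of `g` of order `√ε`.
-/

open Real Set Filter Topology

lemma abs_sinh_le_cosh (t : ℝ) : |sinh t| ≤ cosh t := by
  rw [abs_sinh, ← cosh_abs t]
  exact (sinh_lt_cosh _).le

lemma abs_le_cosh (t : ℝ) : |t| ≤ cosh t :=
  (self_le_sinh_iff.mpr (abs_nonneg t)).trans (abs_sinh t ▸ abs_sinh_le_cosh t)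

lemma hasDerivAt_cosh_mul_sub (ν a x : ℝ) :
    HasDerivAt (fun x => cosh (ν * (x - a))) (ν * sinh (ν * (x - a))) x := by
  simpa [mul_comm] using (((hasDerivAt_id x).sub_const a).const_mul ν).cosh

lemma hasDerivAt_sinh_mul_sub (ν a x : ℝ) :
    HasDerivAt (fun x => sinh (ν * (x - a))) (ν * cosh (ν * (x - a))) x := by
  simpa [mul_comm] using (((hasDerivAt_id x).sub_const a).const_mul ν).sinh

lemma three_le_exp_two : (3 : ℝ) ≤ exp 2 := by linarith [add_one_le_exp (2 : ℝ)]

lemma two_mul_one_sub_le_exp_sub_exp {s : ℝ} (hs : 0 ≤ s) (hs1 : s ≤ 1) :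
    2 * (1 - s) ≤ exp 2 - exp (2 * s) := by
  have h : exp 2 = exp (2 * s) * exp (2 - 2 * s) := by rw [← exp_add]; ring_nf
  have h1 : 1 ≤ exp (2 * s) := one_le_exp (by positivity)
  have h2 : 3 - 2 * s ≤ exp (2 - 2 * s) := by linarith [add_one_le_exp (2 - 2 * s)]
  nlinarith [mul_le_mul h1 h2 (by linarith) (by positivity)]

lemma IsLocalMax.nonpos_of_hasDerivAt {f f' : ℝ → ℝ} {x₀ d : ℝ} (hmax : IsLocalMax f x₀)
    (hf : ∀ x, HasDerivAt f (f' x) x) (hf' : HasDerivAt f' d x₀) : d ≤ 0 := by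
  have hderiv : deriv f = f' := funext fun x => (hf x).deriv
  by_contra! hpos
  have hmin := isLocalMin_of_deriv_deriv_pos (by rwa [hderiv, hf'.deriv]) hmax.deriv_eq_zero
    (hf x₀).continuousAt
  have hconst : f =ᶠ[𝓝 x₀] fun _ => f x₀ :=
    (hmin.and hmax).mono fun x hx => le_antisymm hx.2 hx.1
  have := hconst.deriv.deriv_eq
  rw [hderiv, hf'.deriv] at this
  simp only [deriv_const'] at this
  linarith

lemma exists_isMaxOn_sub_mul_cosh {u : ℝ → ℝ} (hu : Continuous u) (hbdd : BddAbove (range u))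
    {δ ν : ℝ} (hδ : 0 < δ) (hν : 0 < ν) (a : ℝ) :
    ∃ x₀, IsMaxOn (fun x => u x - δ * cosh (ν * (x - a))) univ x₀ := by
  obtain ⟨M, hM⟩ := hbdd
  have hcosh : Tendsto (fun x => cosh (ν * (x - a))) (cocompact ℝ) atTop := by
    refine tendsto_atTop_mono (fun x => ?_) (tendsto_atTop_add_const_right _ (-(ν * |a|))
      (tendsto_norm_cocompact_atTop.atTop_mul_const hν))
    calc ‖x‖ * ν + -(ν * |a|) ≤ |ν * (x - a)| := by
          rw [abs_mul, abs_of_pos hν, Real.norm_eq_abs]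
          nlinarith [abs_sub_abs_le_abs_sub x a]
      _ ≤ cosh (ν * (x - a)) := abs_le_cosh _
  obtain ⟨x₀, hx₀⟩ := (hu.sub (continuous_const.mul (continuous_cosh.comp
    (continuous_const.mul (continuous_id.sub continuous_const))))).exists_forall_ge
    (tendsto_atBot_add_left_of_ge _ M (fun x => hM (mem_range_self x))
      (tendsto_neg_atTop_atBot.comp (hcosh.const_mul_atTop hδ)))
  exact ⟨x₀, fun x _ => hx₀ x⟩

section MaximumPrinciple

variable {u u' u'' b : ℝ → ℝ} {S : Set ℝ} {lam B ν δ a x₀ : ℝ}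

lemma eq_of_isMaxOn_sub_mul_cosh {d : ℝ} (hu : HasDerivAt u d x₀)
    (hmax : IsMaxOn (fun x => u x - δ * cosh (ν * (x - a))) univ x₀) :
    d = δ * (ν * sinh (ν * (x₀ - a))) :=
  sub_eq_zero.mp <| (hmax.isLocalMax univ_mem).hasDerivAt_eq_zero
    (hu.sub ((hasDerivAt_cosh_mul_sub ν a x₀).const_mul δ))

lemma le_mul_cosh_of_isMaxOn (hlam : 0 < lam) (hb : ∀ x, |b x| ≤ B) (hν : 0 < ν)
    (hνB : ν ^ 2 / 2 + B * ν ≤ lam) (hδ : 0 < δ) (hu : ∀ x, HasDerivAt u (u' x) x)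
    (hu' : HasDerivAt u' (u'' x₀) x₀) (hsub : lam * u x₀ ≤ u'' x₀ / 2 + b x₀ * u' x₀)
    (hmax : IsMaxOn (fun x => u x - δ * cosh (ν * (x - a))) univ x₀) (x : ℝ) :
    u x ≤ δ * cosh (ν * (x - a)) := by
  set c := cosh (ν * (x₀ - a))
  have hc : 0 < c := cosh_pos _
  have hfirst : u' x₀ = δ * (ν * sinh (ν * (x₀ - a))) :=
    eq_of_isMaxOn_sub_mul_cosh (hu x₀) hmax
  have hsecond : u'' x₀ ≤ δ * (ν * (ν * c)) := by
    have := (hmax.isLocalMax univ_mem).nonpos_of_hasDerivAt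
      (fun x => (hu x).sub ((hasDerivAt_cosh_mul_sub ν a x).const_mul δ))
      (hu'.sub (((hasDerivAt_sinh_mul_sub ν a x₀).const_mul ν).const_mul δ))
    linarith
  have hdrift : b x₀ * u' x₀ ≤ B * (δ * (ν * c)) := by
    rw [hfirst]
    refine (le_abs_self _).trans ?_
    rw [abs_mul, abs_mul, abs_mul, abs_of_pos hδ, abs_of_pos hν]
    gcongr
    · exact (abs_nonneg _).trans (hb 0)
    · exact hb x₀
    · exact abs_sinh_le_cosh _
  have hx₀ : u x₀ ≤ δ * c := by
    refine le_of_mul_le_mul_left ?_ hlam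
    nlinarith [mul_le_mul_of_nonneg_left hνB (le_of_lt (mul_pos hδ hc))]
  have : u x - δ * cosh (ν * (x - a)) ≤ u x₀ - δ * c := hmax (mem_univ x)
  linarith

theorem nonpos_of_lam_mul_le_generator (hlam : 0 < lam) (hb : ∀ x, |b x| ≤ B) (hS : S.Finite)
    (hbdd : BddAbove (range u)) (hu : ∀ x, HasDerivAt u (u' x) x)
    (hu' : ∀ x ∉ S, HasDerivAt u' (u'' x) x)
    (hsub : ∀ x ∉ S, lam * u x ≤ u'' x / 2 + b x * u' x) (x : ℝ) : u x ≤ 0 := by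
  have hB : 0 ≤ B := (abs_nonneg _).trans (hb 0)
  set ν := lam / (lam + B + 1)
  have hν : 0 < ν := by positivity
  have hν1 : ν ≤ 1 := (div_le_one (by positivity)).mpr (by linarith)
  have hνB : ν ^ 2 / 2 + B * ν ≤ lam := by
    have : ν * (lam + B + 1) = lam := div_mul_cancel₀ _ (by positivity)
    nlinarith
  have hcont : Continuous u := continuous_iff_continuousAt.mpr fun x => (hu x).continuousAt
  have hbarrier : ∀ δ > 0, ∃ a ∈ Icc (0 : ℝ) 1, ∀ x, u x ≤ δ * cosh (ν * (x - a)) := by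
    intro δ hδ
    choose xm hxm using exists_isMaxOn_sub_mul_cosh hcont hbdd hδ hν
    have hinj : Function.Injective xm := by
      intro a a' h
      have e := (eq_of_isMaxOn_sub_mul_cosh (hu _) (hxm a)).symm.trans
        (h ▸ eq_of_isMaxOn_sub_mul_cosh (hu _) (hxm a'))
      have := sinh_injective (mul_left_cancel₀ hν.ne' (mul_left_cancel₀ hδ.ne' e))
      linarith [mul_left_cancel₀ hν.ne' this]
    obtain ⟨a, ha, haS⟩ := ((Icc_infinite zero_lt_one).sdiff (hS.preimage hinj.injOn)).nonempty
    exact ⟨a, ha,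
      le_mul_cosh_of_isMaxOn hlam hb hν hνB hδ hu (hu' _ haS) (hsub _ haS) (hxm a)⟩
  set K := cosh (ν * (|x| + 1))
  refine le_of_forall_pos_le_add fun η hη => ?_
  obtain ⟨a, ha, hua⟩ := hbarrier (η / K) (by positivity)
  have hcosh : cosh (ν * (x - a)) ≤ K := by
    rw [cosh_le_cosh, abs_mul, abs_mul, abs_of_pos hν,
      abs_of_nonneg (by positivity : 0 ≤ |x| + 1)]
    gcongr
    exact (abs_sub _ _).trans (by rw [abs_of_nonneg ha.1]; linarith [ha.2])
  calc u x ≤ η / K * cosh (ν * (x - a)) := hua x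
    _ ≤ η / K * K := by gcongr
    _ = 0 + η := by rw [div_mul_cancel₀ _ (cosh_pos _).ne', zero_add]

theorem le_of_supersolution {f f' f'' g g' g'' : ℝ → ℝ} (hlam : 0 < lam)
    (hb : ∀ x, |b x| ≤ B) (hS : S.Finite) (hbdd : BddAbove (range (f - g)))
    (hf : ∀ x, HasDerivAt f (f' x) x) (hf' : ∀ x ∉ S, HasDerivAt f' (f'' x) x)
    (hg : ∀ x, HasDerivAt g (g' x) x) (hg' : ∀ x ∉ S, HasDerivAt g' (g'' x) x)
    (hfg : ∀ x ∉ S, lam * f x - f'' x / 2 - b x * f' x ≤ lam * g x - g'' x / 2 - b x * g' x)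
    (x : ℝ) : f x ≤ g x := by
  have := nonpos_of_lam_mul_le_generator (u := f - g) (u' := f' - g') (u'' := f'' - g'') hlam hb
    hS hbdd (fun x => (hf x).sub (hg x)) (fun x hx => (hf' x hx).sub (hg' x hx))
    (fun x hx => by simp only [Pi.sub_apply]; linarith [hfg x hx]) x
  simpa [sub_nonpos] using this

theorem abs_le_of_supersolution {f f' f'' g g' g'' φ : ℝ → ℝ} (hlam : 0 < lam)
    (hb : ∀ x, |b x| ≤ B) (hS : S.Finite) (hfb : ∃ M, ∀ x, |f x| ≤ M)
    (hg0 : ∀ x, 0 ≤ g x)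
    (hf : ∀ x, HasDerivAt f (f' x) x) (hf' : ∀ x ∉ S, HasDerivAt f' (f'' x) x)
    (hg : ∀ x, HasDerivAt g (g' x) x) (hg' : ∀ x ∉ S, HasDerivAt g' (g'' x) x)
    (hφ : ∀ x ∉ S, lam * f x - f'' x / 2 - b x * f' x = φ x)
    (hφg : ∀ x ∉ S, |φ x| ≤ lam * g x - g'' x / 2 - b x * g' x) (x : ℝ) :
    |f x| ≤ g x := by
  obtain ⟨M, hM⟩ := hfb
  refine abs_le.mpr ⟨neg_le.mp ?_, ?_⟩
  · refine le_of_supersolution (f := fun y => -f y) hlam hb hS ⟨M, ?_⟩ (fun y => (hf y).neg)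
      (fun y hy => (hf' y hy).neg) hg hg' (fun y hy => ?_) x
    · rintro _ ⟨y, rfl⟩
      simp only [Pi.sub_apply]
      linarith [neg_abs_le (f y), hM y, hg0 y]
    · linarith [hφ y hy, neg_abs_le (φ y), hφg y hy]
  · refine le_of_supersolution hlam hb hS ⟨M, ?_⟩ hf hf' hg hg' (fun y hy => ?_) x
    · rintro _ ⟨y, rfl⟩
      simp only [Pi.sub_apply]
      linarith [le_abs_self (f y), hM y, hg0 y]
    · linarith [hφ y hy, le_abs_self (φ y), hφg y hy]

end MaximumPrinciple

section Gluing

variable {F G F' G' : ℝ → ℝ} {p x : ℝ}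

lemma hasDerivAt_piecewise_Iic_of_ne (hx : x ≠ p) (hF : x < p → HasDerivAt F (F' x) x)
    (hG : p < x → HasDerivAt G (G' x) x) :
    HasDerivAt ((Iic p).piecewise F G) ((Iic p).piecewise F' G' x) x := by
  rcases hx.lt_or_gt with hx | hx
  · rw [piecewise_eq_of_mem _ _ _ (mem_Iic.mpr hx.le)]
    refine (hF hx).congr_of_eventuallyEq ?_
    filter_upwards [Iio_mem_nhds hx] with y hy using
      piecewise_eq_of_mem _ _ _ (mem_Iic.mpr hy.le)
  · rw [piecewise_eq_of_notMem _ _ _ (notMem_Iic.mpr hx)]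
    refine (hG hx).congr_of_eventuallyEq ?_
    filter_upwards [Ioi_mem_nhds hx] with y hy using
      piecewise_eq_of_notMem _ _ _ (notMem_Iic.mpr hy)

lemma hasDerivAt_piecewise_Iic (hF : x ≤ p → HasDerivAt F (F' x) x)
    (hG : p ≤ x → HasDerivAt G (G' x) x) (hFG : F p = G p) (hFG' : F' p = G' p) :
    HasDerivAt ((Iic p).piecewise F G) ((Iic p).piecewise F' G' x) x := by
  rcases eq_or_ne x p with rfl | hx
  · rw [piecewise_eq_of_mem _ _ _ self_mem_Iic]
    have hleft : HasDerivWithinAt ((Iic x).piecewise F G) (F' x) (Iic x) x :=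
      (hF le_rfl).hasDerivWithinAt.congr (fun y hy => piecewise_eq_of_mem _ _ _ hy)
        (piecewise_eq_of_mem _ _ _ self_mem_Iic)
    have hright : HasDerivWithinAt ((Iic x).piecewise F G) (F' x) (Ici x) x := by
      refine (hFG' ▸ hG le_rfl).hasDerivWithinAt.congr (fun y hy => ?_)
        (by rw [piecewise_eq_of_mem _ _ _ self_mem_Iic, hFG])
      rcases eq_or_lt_of_le (mem_Ici.mp hy) with rfl | hy
      · rw [piecewise_eq_of_mem _ _ _ self_mem_Iic, hFG]
      · exact piecewise_eq_of_notMem _ _ _ (notMem_Iic.mpr hy)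
    simpa [Iic_union_Ici] using hleft.union hright
  · exact hasDerivAt_piecewise_Iic_of_ne hx (fun h => hF h.le) (fun h => hG h.le)

end Gluing

noncomputable def evenExt (P : ℝ → ℝ) : ℝ → ℝ := (Iic 0).piecewise (fun x => P (-x)) P

noncomputable def oddExt (P : ℝ → ℝ) : ℝ → ℝ := (Iic 0).piecewise (fun x => -P (-x)) P

section Extension

lemma evenExt_apply (P : ℝ → ℝ) (x : ℝ) : evenExt P x = P |x| := by
  rcases le_or_gt x 0 with hx | hx
  · simp [evenExt, hx, abs_of_nonpos hx]
  · simp [evenExt, hx.not_ge, abs_of_pos hx]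

variable {P P' P'' : ℝ → ℝ} {x : ℝ}

lemma hasDerivAt_evenExt (hP : ∀ t, 0 ≤ t → HasDerivAt P (P' t) t) (h0 : P' 0 = 0) (x : ℝ) :
    HasDerivAt (evenExt P) (oddExt P' x) x :=
  hasDerivAt_piecewise_Iic (F' := fun y => -P' (-y))
    (fun hx => by
      simpa [Function.comp_def] using (hP (-x) (neg_nonneg.mpr hx)).comp x (hasDerivAt_neg' x))
    (hP x) (by simp) (by simp [h0])

lemma hasDerivAt_oddExt (hx : x ≠ 0) (hP : HasDerivAt P' (P'' |x|) |x|) :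
    HasDerivAt (oddExt P') (evenExt P'' x) x :=
  hasDerivAt_piecewise_Iic_of_ne (F' := fun y => P'' (-y)) hx
    (fun hx => by
      rw [abs_of_neg hx] at hP
      simpa [Function.comp_def, Pi.neg_def] using (hP.comp x (hasDerivAt_neg' x)).neg)
    (fun hx => by rwa [abs_of_pos hx] at hP)

end Extension

noncomputable def inwardDrift (ε x : ℝ) : ℝ :=
  if 0 ≤ x ∧ x ≤ ε then -1 / ε else if -ε ≤ x ∧ x < 0 then 1 / ε else 0

lemma inwardDrift_of_pos {ε x : ℝ} (hx : 0 < x) :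
    inwardDrift ε x = if x ≤ ε then -1 / ε else 0 := by
  simp [inwardDrift, hx.le, hx.not_gt]

lemma inwardDrift_neg {ε x : ℝ} (hx : 0 < x) : inwardDrift ε (-x) = -inwardDrift ε x := by
  have h0 : ¬ x ≤ 0 := hx.not_ge
  by_cases h : x ≤ ε <;> simp [inwardDrift, hx, hx.le, hx.not_gt, h0, h, neg_div]

lemma abs_inwardDrift_le {ε : ℝ} (hε : 0 < ε) (x : ℝ) : |inwardDrift ε x| ≤ 1 / ε := by
  unfold inwardDrift
  split_ifs <;> simp [abs_div, abs_of_pos hε, hε.le]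

section Profile

variable (lam ε : ℝ)

/- The pieces of the barrier on `t ≥ 0`: `profileCore` solves `-P'' / 2 + P' / ε = 1` with
`P' 0 = 0`, `profileMid` has `P'' = -2`, `profileTail` solves `λ P = P'' / 2`; the constants
`tailHeight` and `profileMid lam ε ε` glue them into a `C¹` function at `√ε` and `ε`. -/

noncomputable def tailHeight : ℝ := ((exp 2 - 1) * ε + 2 * (√ε - ε)) / √(2 * lam)

noncomputable def profileTail (t : ℝ) : ℝ :=
  tailHeight lam ε * exp (√(2 * lam) * (√ε - t))

noncomputable def profileMid (t : ℝ) : ℝ :=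
  tailHeight lam ε + (exp 2 - 1) * ε * (√ε - t) + (√ε - ε) ^ 2 - (t - ε) ^ 2

noncomputable def profileCore (t : ℝ) : ℝ :=
  profileMid lam ε ε + ε * (t - ε) - ε ^ 2 / 2 * (exp (2 * t / ε) - exp 2)

noncomputable def profile : ℝ → ℝ :=
  (Iic ε).piecewise (profileCore lam ε)
    ((Iic √ε).piecewise (profileMid lam ε) (profileTail lam ε))

noncomputable def profileDeriv : ℝ → ℝ :=
  (Iic ε).piecewise (fun t => ε * (1 - exp (2 * t / ε)))
    ((Iic √ε).piecewise (fun t => -((exp 2 - 1) * ε) - 2 * (t - ε))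
      (fun t => -(√(2 * lam) * profileTail lam ε t)))

noncomputable def profileDeriv2 : ℝ → ℝ :=
  (Iic ε).piecewise (fun t => -2 * exp (2 * t / ε))
    ((Iic √ε).piecewise (fun _ => -2) (fun t => 2 * lam * profileTail lam ε t))

variable {lam ε} {t : ℝ}

lemma hasDerivAt_profileCore (hε : 0 < ε) (t : ℝ) :
    HasDerivAt (profileCore lam ε) (ε * (1 - exp (2 * t / ε))) t := by
  have := ((((hasDerivAt_id' t).const_mul 2).div_const ε).exp.sub_const (exp 2)).const_mul
    (ε ^ 2 / 2)
  refine ((((hasDerivAt_id' t).sub_const ε).const_mul ε).const_add _).sub this |>.congr_deriv ?_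
  field_simp

lemma hasDerivAt_profileCoreDeriv (hε : 0 < ε) (t : ℝ) :
    HasDerivAt (fun t => ε * (1 - exp (2 * t / ε))) (-2 * exp (2 * t / ε)) t := by
  refine ((((hasDerivAt_id' t).const_mul 2).div_const ε).exp.const_sub 1).const_mul ε
    |>.congr_deriv ?_
  field_simp

lemma hasDerivAt_profileMid (t : ℝ) :
    HasDerivAt (profileMid lam ε) (-((exp 2 - 1) * ε) - 2 * (t - ε)) t := by
  refine ((((hasDerivAt_id' t).const_sub √ε).const_mul _).const_add _ |>.add_const _).sub
    (((hasDerivAt_id' t).sub_const ε).pow 2) |>.congr_deriv ?_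
  ring

lemma hasDerivAt_profileMidDeriv (t : ℝ) :
    HasDerivAt (fun t => -((exp 2 - 1) * ε) - 2 * (t - ε)) (-2) t := by
  simpa using (((hasDerivAt_id' t).sub_const ε).const_mul 2).const_sub (-((exp 2 - 1) * ε))

lemma hasDerivAt_profileTail (t : ℝ) :
    HasDerivAt (profileTail lam ε) (-(√(2 * lam) * profileTail lam ε t)) t := by
  unfold profileTail
  refine (((hasDerivAt_id' t).const_sub √ε).const_mul _).exp.const_mul _ |>.congr_deriv ?_
  ring

lemma hasDerivAt_profileTailDeriv (hlam : 0 < lam) (t : ℝ) :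
    HasDerivAt (fun t => -(√(2 * lam) * profileTail lam ε t))
      (2 * lam * profileTail lam ε t) t := by
  refine ((hasDerivAt_profileTail t).const_mul _).neg |>.congr_deriv ?_
  linear_combination profileTail lam ε t * mul_self_sqrt (by positivity : (0 : ℝ) ≤ 2 * lam)

lemma profileCore_self (hε : 0 < ε) : profileCore lam ε ε = profileMid lam ε ε := by
  simp [profileCore, mul_div_cancel_right₀ _ hε.ne']

lemma profileMid_sqrt : profileMid lam ε √ε = profileTail lam ε √ε := by
  simp [profileMid, profileTail]

lemma hasDerivAt_profile (hlam : 0 < lam) (hε : 0 < ε) (hε1 : ε ≤ 1) (t : ℝ) :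
    HasDerivAt (profile lam ε) (profileDeriv lam ε t) t := by
  have hεs : ε ≤ √ε := Real.le_sqrt_self_iff.mpr hε1
  refine hasDerivAt_piecewise_Iic (fun _ => hasDerivAt_profileCore hε t)
    (fun _ => hasDerivAt_piecewise_Iic (fun _ => hasDerivAt_profileMid t)
      (fun _ => hasDerivAt_profileTail t) profileMid_sqrt ?_) ?_ ?_
  · simp only [profileTail, tailHeight, sub_self, mul_zero, exp_zero, mul_one]
    field_simp
    ring
  · rw [piecewise_eq_of_mem _ _ _ (mem_Iic.mpr hεs), profileCore_self hε]
  · rw [piecewise_eq_of_mem _ _ _ (mem_Iic.mpr hεs), mul_div_cancel_right₀ _ hε.ne']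
    ring

lemma hasDerivAt_profileDeriv (hlam : 0 < lam) (hε : 0 < ε) (ht : t ≠ ε) (ht' : t ≠ √ε) :
    HasDerivAt (profileDeriv lam ε) (profileDeriv2 lam ε t) t :=
  hasDerivAt_piecewise_Iic_of_ne ht (fun _ => hasDerivAt_profileCoreDeriv hε t)
    (fun _ => hasDerivAt_piecewise_Iic_of_ne ht' (fun _ => hasDerivAt_profileMidDeriv t)
      (fun _ => hasDerivAt_profileTailDeriv hlam t))

lemma tailHeight_nonneg (hε : 0 ≤ ε) (hε1 : ε ≤ 1) : 0 ≤ tailHeight lam ε := by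
  have : ε ≤ √ε := Real.le_sqrt_self_iff.mpr hε1
  have : 0 ≤ exp 2 - 1 := by linarith [three_le_exp_two]
  unfold tailHeight
  positivity

lemma profileTail_le (hε : 0 ≤ ε) (hε1 : ε ≤ 1) (ht : √ε ≤ t) :
    profileTail lam ε t ≤ tailHeight lam ε :=
  mul_le_of_le_one_right (tailHeight_nonneg hε hε1)
    (exp_le_one_iff.mpr (mul_nonpos_of_nonneg_of_nonpos (sqrt_nonneg _) (by linarith)))

lemma profileTail_nonneg (hε : 0 ≤ ε) (hε1 : ε ≤ 1) : 0 ≤ profileTail lam ε t :=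
  mul_nonneg (tailHeight_nonneg hε hε1) (exp_pos _).le

lemma tailHeight_le_profileMid (hε : 0 ≤ ε) (ht : ε ≤ t) (ht' : t ≤ √ε) :
    tailHeight lam ε ≤ profileMid lam ε t := by
  have : 0 ≤ exp 2 - 1 := by linarith [three_le_exp_two]
  unfold profileMid
  nlinarith [mul_nonneg (mul_nonneg this hε) (sub_nonneg.mpr ht')]

lemma profileMid_le_profileMid_self (hε : 0 ≤ ε) (ht : ε ≤ t) :
    profileMid lam ε t ≤ profileMid lam ε ε := by
  have : 0 ≤ exp 2 - 1 := by linarith [three_le_exp_two]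
  unfold profileMid
  nlinarith [mul_nonneg (mul_nonneg this hε) (sub_nonneg.mpr ht)]

lemma profileMid_self_le_profileCore (hε : 0 < ε) (ht : 0 ≤ t) (ht' : t ≤ ε) :
    profileMid lam ε ε ≤ profileCore lam ε t := by
  have h := two_mul_one_sub_le_exp_sub_exp (div_nonneg ht hε.le) ((div_le_one hε).mpr ht')
  rw [mul_div_assoc'] at h
  have : ε * (t - ε) = ε ^ 2 / 2 * (-(2 * (1 - t / ε))) := by field_simp; ring
  unfold profileCore
  nlinarith [sq_nonneg ε]

lemma profileCore_le_profileCore_zero (hε : 0 < ε) (t : ℝ) :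
    profileCore lam ε t ≤ profileCore lam ε 0 := by
  have h := add_one_le_exp (2 * t / ε)
  have : ε * t = ε ^ 2 / 2 * (2 * t / ε) := by field_simp
  unfold profileCore
  simp only [mul_zero, zero_div, exp_zero]
  nlinarith [sq_nonneg ε]

lemma profileCore_zero_le (hlam : 0 < lam) (hε : 0 < ε) (hε1 : ε ≤ 1) :
    profileCore lam ε 0 ≤ ((exp 2 + 1) / √(2 * lam) + 2 * exp 2) * √ε := by
  have hμ : 0 < √(2 * lam) := by positivity
  set s := √ε with hs
  have hs0 : 0 < s := sqrt_pos.mpr hε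
  have hs1 : s ≤ 1 := sqrt_le_one.mpr hε1
  have hεs : ε = s ^ 2 := (sq_sqrt hε.le).symm
  have he := three_le_exp_two
  have hH : tailHeight lam ε ≤ (exp 2 + 1) / √(2 * lam) * s := by
    have : ε ≤ s := Real.le_sqrt_self_iff.mpr hε1
    rw [tailHeight, div_mul_eq_mul_div]
    gcongr
    nlinarith
  have hrest : (exp 2 - 1) * ε * (s - ε) + (s - ε) ^ 2 - ε ^ 2 - ε ^ 2 / 2 * (1 - exp 2)
      ≤ 2 * exp 2 * s := by
    rw [hεs]
    have h1 : s ^ 2 * (s - s ^ 2) ≤ s := by nlinarith [mul_pos hs0 hs0]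
    have h2 : (s - s ^ 2) ^ 2 ≤ s := by nlinarith [mul_pos hs0 hs0]
    have h3 : (s ^ 2) ^ 2 ≤ s := by nlinarith [mul_pos hs0 hs0, pow_le_one₀ hs0.le hs1 (n := 3)]
    nlinarith
  simp only [profileCore, profileMid, mul_zero, zero_div, exp_zero]
  linarith

lemma profile_nonneg (hε : 0 < ε) (hε1 : ε ≤ 1) (ht : 0 ≤ t) : 0 ≤ profile lam ε t := by
  have hεs : ε ≤ √ε := Real.le_sqrt_self_iff.mpr hε1
  have hH := tailHeight_nonneg (lam := lam) hε.le hε1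
  rcases le_or_gt t ε with h1 | h1
  · simp only [profile, piecewise, mem_Iic, h1, if_true]
    exact hH.trans ((tailHeight_le_profileMid hε.le le_rfl hεs).trans
      (profileMid_self_le_profileCore hε ht h1))
  rcases le_or_gt t √ε with h2 | h2
  · simp only [profile, piecewise, mem_Iic, h1.not_ge, h2, if_true, if_false]
    exact hH.trans (tailHeight_le_profileMid hε.le h1.le h2)
  · simp only [profile, piecewise, mem_Iic, h1.not_ge, h2.not_ge, if_false]
    exact profileTail_nonneg hε.le hε1

lemma profile_le (hε : 0 < ε) (hε1 : ε ≤ 1) (t : ℝ) :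
    profile lam ε t ≤ profileCore lam ε 0 := by
  have hεs : ε ≤ √ε := Real.le_sqrt_self_iff.mpr hε1
  have hmid : profileMid lam ε ε ≤ profileCore lam ε 0 :=
    (profileMid_self_le_profileCore hε hε.le le_rfl).trans
      (profileCore_le_profileCore_zero hε ε)
  rcases le_or_gt t ε with h1 | h1
  · simp only [profile, piecewise, mem_Iic, h1, if_true]
    exact profileCore_le_profileCore_zero hε t
  rcases le_or_gt t √ε with h2 | h2
  · simp only [profile, piecewise, mem_Iic, h1.not_ge, h2, if_true, if_false]
    exact (profileMid_le_profileMid_self hε.le h1.le).trans hmid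
  · simp only [profile, piecewise, mem_Iic, h1.not_ge, h2.not_ge, if_false]
    exact (profileTail_le hε.le hε1 h2.le).trans
      ((tailHeight_le_profileMid hε.le le_rfl hεs).trans hmid)

lemma indicator_le_profile_generator (hlam : 0 < lam) (hε : 0 < ε) (hε1 : ε < 1) (ht : 0 < t)
    (htε : t ≠ ε) (hts : t ≠ √ε) :
    (Ioo (-√ε) √ε).indicator (fun _ => (1 : ℝ)) t
      ≤ lam * profile lam ε t - profileDeriv2 lam ε t / 2
        - inwardDrift ε t * profileDeriv lam ε t := by
  have hεs : ε < √ε := Real.lt_sqrt_self_iff.mpr ⟨hε.ne', hε1⟩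
  have hs : 0 < √ε := hε.trans hεs
  have hg := profile_nonneg (lam := lam) hε hε1.le ht.le
  have hlg := mul_nonneg hlam.le hg
  rw [inwardDrift_of_pos ht]
  rcases htε.lt_or_gt with h1 | h1
  · have hmem : t ∈ Ioo (-√ε) √ε := ⟨by linarith, by linarith⟩
    simp only [profile, profileDeriv, profileDeriv2, piecewise, mem_Iic, h1.le, if_true,
      indicator_of_mem hmem] at hlg ⊢
    have : -1 / ε * (ε * (1 - exp (2 * t / ε))) = exp (2 * t / ε) - 1 := by field_simp; ring
    linarith
  rcases hts.lt_or_gt with h2 | h2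
  · have hmem : t ∈ Ioo (-√ε) √ε := ⟨by linarith, h2⟩
    simp only [profile, profileDeriv, profileDeriv2, piecewise, mem_Iic, h1.not_ge, h2.le,
      if_true, if_false, indicator_of_mem hmem] at hlg ⊢
    linarith
  · have hmem : t ∉ Ioo (-√ε) √ε := fun h => h2.not_gt h.2
    simp only [profile, profileDeriv, profileDeriv2, piecewise, mem_Iic, h1.not_ge, h2.not_ge,
      if_false, indicator_of_notMem hmem]
    linarith

end Profile

section Barrier

variable {lam ε : ℝ}

lemma ne_of_notMem_breakpoints {x : ℝ} (hx : x ∉ ({-√ε, -ε, 0, ε, √ε} : Set ℝ)) :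
    x ≠ 0 ∧ |x| ≠ ε ∧ |x| ≠ √ε := by
  simp only [mem_insert_iff, mem_singleton_iff, not_or] at hx
  obtain ⟨h1, h2, h3, h4, h5⟩ := hx
  refine ⟨h3, fun h => ?_, fun h => ?_⟩ <;> rcases abs_choice x with hx | hx
  exacts [h4 (hx ▸ h), h2 (by linarith), h5 (hx ▸ h), h1 (by linarith)]

lemma hasDerivAt_evenExt_profile (hlam : 0 < lam) (hε : 0 < ε) (hε1 : ε ≤ 1) (x : ℝ) :
    HasDerivAt (evenExt (profile lam ε)) (oddExt (profileDeriv lam ε) x) x :=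
  hasDerivAt_evenExt (fun t _ => hasDerivAt_profile hlam hε hε1 t)
    (by simp [profileDeriv, piecewise, hε.le]) x

lemma hasDerivAt_oddExt_profileDeriv (hlam : 0 < lam) (hε : 0 < ε) {x : ℝ}
    (hx : x ∉ ({-√ε, -ε, 0, ε, √ε} : Set ℝ)) :
    HasDerivAt (oddExt (profileDeriv lam ε)) (evenExt (profileDeriv2 lam ε) x) x := by
  obtain ⟨h0, hε', hs⟩ := ne_of_notMem_breakpoints hx
  exact hasDerivAt_oddExt h0 (hasDerivAt_profileDeriv hlam hε hε' hs)

lemma indicator_le_evenExt_profile_generator (hlam : 0 < lam) (hε : 0 < ε) (hε1 : ε < 1) {x : ℝ}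
    (hx : x ∉ ({-√ε, -ε, 0, ε, √ε} : Set ℝ)) :
    (Ioo (-√ε) √ε).indicator (fun _ => (1 : ℝ)) x
      ≤ lam * evenExt (profile lam ε) x - evenExt (profileDeriv2 lam ε) x / 2
        - inwardDrift ε x * oddExt (profileDeriv lam ε) x := by
  obtain ⟨h0, hε', hs⟩ := ne_of_notMem_breakpoints hx
  rcases h0.lt_or_gt with hneg | hpos
  · have h := indicator_le_profile_generator hlam hε hε1 (neg_pos.mpr hneg)
      (by rwa [abs_of_neg hneg] at hε') (by rwa [abs_of_neg hneg] at hs)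
    have hdrift := inwardDrift_neg (ε := ε) (neg_pos.mpr hneg)
    rw [neg_neg] at hdrift
    have hsymm : -x ∈ Ioo (-√ε) √ε ↔ x ∈ Ioo (-√ε) √ε := by
      simp only [mem_Ioo]; constructor <;> rintro ⟨h1, h2⟩ <;> constructor <;> linarith
    simp only [indicator, hsymm] at h
    simp only [evenExt, oddExt, piecewise, mem_Iic, hneg.le, if_true, hdrift, indicator,
      neg_mul_neg]
    exact h
  · have h := indicator_le_profile_generator hlam hε hε1 hpos
      (by rwa [abs_of_pos hpos] at hε') (by rwa [abs_of_pos hpos] at hs)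
    simpa only [evenExt, oddExt, piecewise, mem_Iic, hpos.not_ge, if_false] using h

lemma evenExt_profile_nonneg (hε : 0 < ε) (hε1 : ε ≤ 1) (x : ℝ) :
    0 ≤ evenExt (profile lam ε) x := by
  simpa only [evenExt_apply] using profile_nonneg hε hε1 (abs_nonneg x)

lemma evenExt_profile_le (hlam : 0 < lam) (hε : 0 < ε) (hε1 : ε ≤ 1) (x : ℝ) :
    evenExt (profile lam ε) x ≤ ((exp 2 + 1) / √(2 * lam) + 2 * exp 2) * √ε := by
  rw [evenExt_apply]
  exact (profile_le hε hε1 |x|).trans (profileCore_zero_le hlam hε hε1)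

end Barrier

/-- **Resolvent bound for the comparison diffusion.**
For `λ > 0` and the strongly inward-pointing drift `b_V^ε`, every bounded `C¹`
function `f`, twice differentiable away from `{-√ε, -ε, 0, ε, √ε}` and solving
`λ f - (1/2) f'' - b_V^ε f' = 1_{(-√ε,√ε)}` there, satisfies
`sup |f| ≤ C √ε`, uniformly for small `ε`. -/
theorem stmt_7 (lam : ℝ) (hlam : 0 < lam) :
    ∃ C > 0, ∃ ε₀ ∈ Set.Ioo (0:ℝ) 1, ∀ ε ∈ Set.Ioo (0:ℝ) ε₀,
      ∀ bV f : ℝ → ℝ,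
        (∀ x, bV x = if 0 ≤ x ∧ x ≤ ε then -1/ε
                     else if -ε ≤ x ∧ x < 0 then 1/ε else 0) →
        (∃ M : ℝ, ∀ x, |f x| ≤ M) →
        ContDiff ℝ 1 f →
        (∀ x, x ∉ ({-Real.sqrt ε, -ε, 0, ε, Real.sqrt ε} : Set ℝ) →
          DifferentiableAt ℝ (deriv f) x) →
        (∀ x, x ∉ ({-Real.sqrt ε, -ε, 0, ε, Real.sqrt ε} : Set ℝ) →
          lam * f x - (1/2) * deriv (deriv f) x - bV x * deriv f x
            = Set.indicator (Set.Ioo (-Real.sqrt ε) (Real.sqrt ε)) (fun _ => 1) x) →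
        ∀ x, |f x| ≤ C * Real.sqrt ε := by
  refine ⟨(exp 2 + 1) / √(2 * lam) + 2 * exp 2, by positivity, 1 / 2,
    ⟨by norm_num, by norm_num⟩, ?_⟩
  rintro ε ⟨hε, hε2⟩ bV f hbV hfb hf hf2 hPDE x
  have hε1 : ε < 1 := by linarith
  obtain rfl : bV = inwardDrift ε := funext hbV
  refine (abs_le_of_supersolution (φ := (Ioo (-√ε) √ε).indicator fun _ => 1) hlam
    (abs_inwardDrift_le hε) (toFinite _) hfb
    (evenExt_profile_nonneg hε hε1.le) (fun y => (hf.differentiable one_ne_zero y).hasDerivAt)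
    (fun y hy => (hf2 y hy).hasDerivAt) (hasDerivAt_evenExt_profile hlam hε hε1.le)
    (fun y hy => hasDerivAt_oddExt_profileDeriv hlam hε hy) (fun y hy => ?_) (fun y hy => ?_) x).trans
    (evenExt_profile_le hlam hε hε1.le x)
  · rw [← hPDE y hy]
    ring
  · rw [abs_of_nonneg (indicator_nonneg (fun _ _ => zero_le_one) y)]
    exact indicator_le_evenExt_profile_generator hlam hε hε1 hy
end
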